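/- arXiv:2503.00581 — 11 statements merged into one kernel-verified Lean document; each statement's English description precedes it below -/
import Mathlib

section
/- Let p be a prime and k ≤ N. Let s ∈ ℤ_p and let f(x) = s + ∑_{j=1}^{k-1} b_j x^j be a polynomial over ℤ_p of degree at most k−1 with f(0) = s. For any k pairwise distinct evaluation points x_{a_0}, …, x_{a_{k-1}} ∈ ℤ_p \ {0}, there exist coefficients r_0, …, r_{k-1} ∈ ℤ_p, depending only on the evaluation points, such that s = ∑_{i=0}^{k-1} f(x_{a_i}) · r_i. Moreover, for each 1 ≤ j ≤ k−1 there exist coefficients r_{0,j}, …, r_{k-1,j} ∈ ℤ_p, depending only on the evaluation points, such that b_j = ∑_{i=0}^{k-1} f(x_{a_i}) · r_{i,j}. -/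
/-!
Shamir's (N,k) secret sharing over ℤ_p: reconstruction of the secret `s = f(0)` and of each
non-constant coefficient `b_j = f.coeff j` from any `k` shares `f(x_{a_i})` at pairwise distinct
nonzero evaluation points, via coefficients depending only on the evaluation points.
-/

theorem shamir_reconstruction (p : ℕ) [Fact p.Prime] (N k : ℕ) (hk : 0 < k) (hkN : k ≤ N)
    (x : Fin k → ZMod p) (hx : Function.Injective x) (hx0 : ∀ i, x i ≠ 0) :
    (∃ r : Fin k → ZMod p, ∀ f : Polynomial (ZMod p), f.degree < k →
      f.eval 0 = ∑ i, f.eval (x i) * r i) ∧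
    (∀ j : ℕ, 1 ≤ j → j ≤ k - 1 → ∃ r : Fin k → ZMod p,
      ∀ f : Polynomial (ZMod p), f.degree < k →
        f.coeff j = ∑ i, f.eval (x i) * r i) := by
  have hinj : Set.InjOn x (Finset.univ : Finset (Fin k)) := hx.injOn
  have hdeg : ∀ f : Polynomial (ZMod p), f.degree < k →
      f = ∑ i, Polynomial.C (f.eval (x i)) * Lagrange.basis Finset.univ x i := by
    intro f hf
    have := Lagrange.eq_interpolate hinj (by simpa using hf)
    simpa [Lagrange.interpolate_apply] using this
  constructor
  · refine ⟨fun i => (Lagrange.basis Finset.univ x i).eval 0, fun f hf => ?_⟩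
    conv_lhs => rw [hdeg f hf]
    simp [Polynomial.eval_finset_sum]
  · intro j _ _
    refine ⟨fun i => (Lagrange.basis Finset.univ x i).coeff j, fun f hf => ?_⟩
    conv_lhs => rw [hdeg f hf]
    simp [Polynomial.finset_sum_coeff, Polynomial.coeff_C_mul]
end

section
/- Let p be a prime, k ≥ 1, and fix a secret s ∈ ℤ_p and pairwise distinct nonzero points x_{a_0}, …, x_{a_{k-2}} ∈ ℤ_p. For every choice of target values y_0, …, y_{k-2} ∈ ℤ_p there exists exactly one polynomial f over ℤ_p of degree at most k−1 with f(0) = s and f(x_{a_i}) = y_i for all 0 ≤ i ≤ k−2. Consequently, when the k−1 non-constant coefficients of f are chosen independently and uniformly at random from ℤ_p, the tuple of shares (f(x_{a_0}), …, f(x_{a_{k-2}})) is uniformly distributed over ℤ_p^{k-1} (equivalently, the k−1 shares are mutually independent and each uniform on ℤ_p), independently of the secret s. -/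
/-!
Privacy of Shamir's (N,k) scheme over ℤ_p: for any secret `s` and any `k-1` pairwise distinct
nonzero evaluation points, (1) every tuple of target values is interpolated by exactly one
polynomial of degree ≤ k-1 with constant term `s`, and (2) when the `k-1` non-constant
coefficients are drawn independently and uniformly from ℤ_p, the tuple of the `k-1` shares is
uniformly distributed on `(ℤ_p)^{k-1}` (independently of `s`).
-/

theorem shamir_shares_uniform (p : ℕ) [Fact p.Prime] [NeZero p] (k : ℕ) (hk : 1 ≤ k)
    (s : ZMod p) (x : Fin (k - 1) → ZMod p) (hx : Function.Injective x)
    (hx0 : ∀ i, x i ≠ 0) :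
    (∀ y : Fin (k - 1) → ZMod p, ∃! f : Polynomial (ZMod p),
      f.degree < k ∧ f.eval 0 = s ∧ ∀ i, f.eval (x i) = y i) ∧
    PMF.map (fun b : Fin (k - 1) → ZMod p => fun i => s + ∑ j, b j * x i ^ ((j : ℕ) + 1))
        (PMF.uniformOfFintype (Fin (k - 1) → ZMod p)) =
      PMF.uniformOfFintype (Fin (k - 1) → ZMod p) := by
  classical
  -- an injective family of k points: 0 together with the x i
  set z : Option (Fin (k - 1)) → ZMod p := fun o => o.elim 0 x with hz
  have hzinj : Function.Injective z := by
    rintro (_ | a) (_ | b) h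
    · rfl
    · exact absurd h.symm (hx0 b)
    · exact absurd h (hx0 a)
    · exact congrArg some (hx h)
  have hcard : Fintype.card (Option (Fin (k - 1))) = k := by
    simp [Nat.sub_add_cancel hk]
  -- key vanishing lemma
  have key : ∀ h : Polynomial (ZMod p), h.degree < (k : ℕ) → h.eval 0 = 0 →
      (∀ i, h.eval (x i) = 0) → h = 0 := by
    intro h hdeg h0 hi
    by_cases hne : h = 0
    · exact hne
    refine Polynomial.eq_zero_of_natDegree_lt_card_of_eval_eq_zero h hzinj ?_ ?_
    · rintro (_ | a)
      · exact h0
      · exact hi a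
    · rw [hcard]
      exact (Polynomial.natDegree_lt_iff_degree_lt hne).2 (by exact_mod_cast hdeg)
  -- the polynomial attached to coefficients b
  set P : (Fin (k - 1) → ZMod p) → Polynomial (ZMod p) :=
    fun b => Polynomial.C s + ∑ j, Polynomial.C (b j) * Polynomial.X ^ ((j : ℕ) + 1) with hP
  have hk0 : (0 : WithBot ℕ) < (k : ℕ) := by
    exact_mod_cast (show (0:ℕ) < k by omega)
  have hPdeg : ∀ b, (P b).degree < (k : ℕ) := by
    intro b
    apply lt_of_le_of_lt (Polynomial.degree_add_le _ _)
    apply max_lt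
    · exact lt_of_le_of_lt Polynomial.degree_C_le hk0
    · apply lt_of_le_of_lt (Polynomial.degree_sum_le _ _)
      apply Finset.sup_lt_iff (lt_of_le_of_lt bot_le hk0) |>.2
      intro j _
      apply lt_of_le_of_lt (Polynomial.degree_C_mul_X_pow_le _ _)
      exact_mod_cast (by omega : (j : ℕ) + 1 < k)
  have hPeval : ∀ b t, (P b).eval t = s + ∑ j, b j * t ^ ((j : ℕ) + 1) := by
    intro b t
    simp [hP, Polynomial.eval_finset_sum]
  have hPeval0 : ∀ b, (P b).eval 0 = s := by
    intro b; rw [hPeval]; simp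
  -- the share map and its bijectivity
  set T : (Fin (k - 1) → ZMod p) → (Fin (k - 1) → ZMod p) :=
    fun b i => s + ∑ j, b j * x i ^ ((j : ℕ) + 1) with hT
  have hTinj : Function.Injective T := by
    intro b c hbc
    have hpoly : P b - P c = 0 := by
      apply key
      · apply lt_of_le_of_lt (Polynomial.degree_sub_le _ _) (max_lt (hPdeg b) (hPdeg c))
      · simp [hPeval0]
      · intro i
        have := congrFun hbc i
        simp only [hT] at this
        simp [hPeval, this]
    have hcoeff : ∀ j : Fin (k - 1), b j = c j := by
      intro j
      have := congrArg (fun q => Polynomial.coeff q ((j : ℕ) + 1)) hpoly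
      simpa [hP, Polynomial.coeff_X_pow, Polynomial.finset_sum_coeff,
        Fin.val_inj, sub_eq_zero] using this
    exact funext hcoeff
  have hTbij : Function.Bijective T := (Finite.injective_iff_bijective).1 hTinj
  constructor
  · intro y
    obtain ⟨b, hb⟩ := hTbij.2 y
    refine ⟨P b, ⟨hPdeg b, hPeval0 b, fun i => ?_⟩, ?_⟩
    · rw [hPeval]; exact congrFun hb i
    · rintro g ⟨hgdeg, hg0, hgy⟩
      have : g - P b = 0 := by
        apply key
        · exact lt_of_le_of_lt (Polynomial.degree_sub_le _ _) (max_lt hgdeg (hPdeg b))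
        · simp [hg0, hPeval0]
        · intro i
          have h1 := congrFun hb i
          simp only [hT] at h1
          rw [Polynomial.eval_sub, hgy i, hPeval, h1, sub_self]
      exact sub_eq_zero.1 this
  · ext v
    obtain ⟨a0, ha0⟩ := hTbij.2 v
    rw [PMF.map_apply, tsum_eq_single a0 ?_]
    · simp [ha0]
    · intro a ha
      have : v ≠ T a := fun hv => ha (hTinj (ha0.trans hv).symm)
      simp [this]
end

section
/- Let p and q be positive integers with p dividing q, and set Δ = q/p. Let m and e be integers with −p/2 ≤ m < p/2 and |e| < q/(2p). Then the integer ⌊(p/q)·(Δ·m + e)⌉ obtained by rounding to the nearest integer is congruent to m modulo p; in fact it equals m. -/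
/-!
BFV rounding step: if `p ∣ q`, `Δ = q/p`, `-p/2 ≤ m < p/2` and `|e| < q/(2p)`, then rounding
`(p/q)·(Δ·m + e)` to the nearest integer gives back `m` (in particular it is congruent to `m`
modulo `p`).
-/

theorem bfv_rounding (p q : ℕ) (hp : 0 < p) (hq : 0 < q) (hdvd : p ∣ q)
    (Δ : ℕ) (hΔ : Δ = q / p) (m e : ℤ)
    (hm1 : -((p : ℚ) / 2) ≤ (m : ℚ)) (hm2 : (m : ℚ) < (p : ℚ) / 2)
    (he : |(e : ℚ)| < (q : ℚ) / (2 * p)) :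
    (round ((p : ℚ) / (q : ℚ) * ((Δ : ℚ) * (m : ℚ) + (e : ℚ)))) ≡ m [ZMOD (p : ℤ)] ∧
      round ((p : ℚ) / (q : ℚ) * ((Δ : ℚ) * (m : ℚ) + (e : ℚ))) = m := by
  have hΔp : (Δ : ℚ) * p = q := by
    have : Δ * p = q := by
      rw [hΔ, Nat.div_mul_cancel hdvd]
    exact_mod_cast this
  have hp' : (0:ℚ) < p := by exact_mod_cast hp
  have hq' : (0:ℚ) < q := by exact_mod_cast hq
  have key : (p : ℚ) / (q : ℚ) * ((Δ : ℚ) * (m : ℚ) + (e : ℚ))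
      = (m : ℚ) + (e : ℚ) * p / q := by
    field_simp
    ring_nf
    nlinarith [hΔp]
  have habs : |(e : ℚ) * p / q| < 1/2 := by
    rw [abs_div, abs_mul, abs_of_pos hp', abs_of_pos hq', div_lt_iff₀ hq']
    have h2 : |(e:ℚ)| * (2*p) < q :=
      (lt_div_iff₀ (by positivity : (0:ℚ) < 2*p)).mp he
    nlinarith [h2]
  have hround : round ((m : ℚ) + (e : ℚ) * p / q) = m := by
    rw [add_comm, round_add_intCast]
    have h0 : round ((e : ℚ) * p / q) = 0 := by
      rw [round_eq_zero_iff]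
      rw [abs_lt] at habs
      constructor
      · linarith [habs.1]
      · linarith [habs.2]
    simp [h0]
  have heq : round ((p : ℚ) / (q : ℚ) * ((Δ : ℚ) * (m : ℚ) + (e : ℚ))) = m := by
    rw [key, hround]
  exact ⟨by rw [heq], heq⟩
end

section
/- Let n, N ≥ 1 and let s, u_1, …, u_N, e_pk, and e_{i,0}, e_{i,1} (i = 1, …, N) be polynomials with integer coefficients of degree < n such that ‖s‖ ≤ N, every coefficient of each u_i lies in {−1, 0, 1}, and ‖e_pk‖, ‖e_{i,0}‖, ‖e_{i,1}‖ ≤ B for all i. Then the reduction modulo X^n + 1 of ∑_{i=1}^{N} (e_{i,0} + s·e_{i,1} − u_i·e_pk) has infinity norm at most B·N·(2nN + 1). -/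
open Polynomial

noncomputable def inftyNorm (g : Polynomial ℤ) : ℕ :=
  g.support.sup fun i => (g.coeff i).natAbs

lemma abs_coeff_le_inftyNorm (g : Polynomial ℤ) (k : ℕ) :
    |g.coeff k| ≤ (inftyNorm g : ℤ) := by
  by_cases h : g.coeff k = 0
  · simp [h]
  · have hk : k ∈ g.support := mem_support_iff.2 h
    have := Finset.le_sup (f := fun i => (g.coeff i).natAbs) hk
    rw [Int.abs_eq_natAbs]
    exact_mod_cast this

lemma mul_coeff_zero_of_big (n : ℕ) (a b : Polynomial ℤ)
    (ha : a.degree < (n : ℕ)) (hb : b.degree < (n : ℕ))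
    {k : ℕ} (hk : 2 * n ≤ k) : (a * b).coeff k = 0 := by
  rw [coeff_mul]
  apply Finset.sum_eq_zero
  rintro ⟨p, q⟩ hpq
  rw [Finset.HasAntidiagonal.mem_antidiagonal] at hpq
  by_cases hp : n ≤ p
  · rw [coeff_eq_zero_of_degree_lt (ha.trans_le (by exact_mod_cast hp)), zero_mul]
  · have hq : n ≤ q := by omega
    rw [coeff_eq_zero_of_degree_lt (hb.trans_le (by exact_mod_cast hq)), mul_zero]

lemma conv_diff_bound (n : ℕ) (a b : Polynomial ℤ) (A Bb : ℕ)
    (ha : a.degree < (n : ℕ)) (hb : b.degree < (n : ℕ))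
    (hA : ∀ k, |a.coeff k| ≤ (A : ℤ)) (hB : ∀ k, |b.coeff k| ≤ (Bb : ℤ))
    {j : ℕ} (hj : j < n) :
    |(a * b).coeff j - (a * b).coeff (n + j)| ≤ (n : ℤ) * A * Bb := by
  have hterm : ∀ p q : ℕ, |a.coeff p * b.coeff q| ≤ (A : ℤ) * Bb := by
    intro p q
    rw [abs_mul]
    exact mul_le_mul (hA p) (hB q) (abs_nonneg _) (by positivity)
  have h1 : |(a * b).coeff j| ≤ ((j + 1 : ℕ) : ℤ) * ((A : ℤ) * Bb) := by
    rw [coeff_mul]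
    refine (Finset.abs_sum_le_sum_abs _ _).trans ?_
    refine (Finset.sum_le_card_nsmul _ _ ((A : ℤ) * Bb) ?_).trans_eq ?_
    · rintro ⟨p, q⟩ _
      exact hterm p q
    · rw [Finset.Nat.card_antidiagonal]
      simp [nsmul_eq_mul]
  have h2 : |(a * b).coeff (n + j)| ≤ ((n - (j + 1) : ℕ) : ℤ) * ((A : ℤ) * Bb) := by
    rw [coeff_mul]
    have hzero : ∀ x ∈ Finset.HasAntidiagonal.antidiagonal (n + j),
        x ∉ (Finset.HasAntidiagonal.antidiagonal (n + j)).filter (fun x => j + 1 ≤ x.1 ∧ x.1 < n) →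
        a.coeff x.1 * b.coeff x.2 = 0 := by
      rintro ⟨p, q⟩ hx hnx
      rw [Finset.HasAntidiagonal.mem_antidiagonal] at hx
      rw [Finset.mem_filter, Finset.HasAntidiagonal.mem_antidiagonal] at hnx
      push_neg at hnx
      have hcond := hnx hx
      by_cases hp : n ≤ p
      · rw [coeff_eq_zero_of_degree_lt (ha.trans_le (by exact_mod_cast hp)), zero_mul]
      · have hple : p ≤ j := by
          by_contra hc
          exact hp (hcond (by omega))
        have hq : n ≤ q := by omega
        rw [coeff_eq_zero_of_degree_lt (hb.trans_le (by exact_mod_cast hq)), mul_zero]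
    rw [← Finset.sum_filter_of_ne (p := fun x => j + 1 ≤ x.1 ∧ x.1 < n)
      (fun x hx hne => by
        by_contra hc
        exact hne (hzero x hx (fun hmem => hc ((Finset.mem_filter.1 hmem).2))))]
    refine (Finset.abs_sum_le_sum_abs _ _).trans ?_
    refine (Finset.sum_le_card_nsmul _ _ ((A : ℤ) * Bb) ?_).trans ?_
    · rintro ⟨p, q⟩ _
      exact hterm p q
    · have hcard : ((Finset.HasAntidiagonal.antidiagonal (n + j)).filter (fun x => j + 1 ≤ x.1 ∧ x.1 < n)).card
          ≤ (Finset.Ico (j + 1) n).card := by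
        apply Finset.card_le_card_of_injOn (fun x => x.1)
        · rintro ⟨p, q⟩ hx
          rw [Finset.mem_coe, Finset.mem_filter] at hx
          simpa using hx.2
        · rintro ⟨p, q⟩ hx ⟨p', q'⟩ hx' h
          rw [Finset.mem_coe, Finset.mem_filter, Finset.HasAntidiagonal.mem_antidiagonal] at hx hx'
          simp only at h
          have : q = q' := by omega
          simp_all
      rw [Nat.card_Ico] at hcard
      calc _ ≤ ((n - (j + 1) : ℕ)) • ((A : ℤ) * Bb) := by
              apply nsmul_le_nsmul_left (by positivity) hcard
        _ = _ := by simp [nsmul_eq_mul]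
  calc |(a * b).coeff j - (a * b).coeff (n + j)|
      ≤ |(a * b).coeff j| + |(a * b).coeff (n + j)| := abs_sub _ _
    _ ≤ ((j + 1 : ℕ) : ℤ) * ((A : ℤ) * Bb) + ((n - (j + 1) : ℕ) : ℤ) * ((A : ℤ) * Bb) :=
        add_le_add h1 h2
    _ = (n : ℤ) * A * Bb := by
        have : ((j + 1 : ℕ) : ℤ) + ((n - (j + 1) : ℕ) : ℤ) = (n : ℤ) := by
          push_cast [Nat.cast_sub (by omega : j + 1 ≤ n)]
          ring
        rw [← add_mul, this]
        ring

lemma coeff_sum_C_mul_X_pow (n : ℕ) (a : ℕ → ℤ) (k : ℕ) :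
    (∑ j ∈ Finset.range n, C (a j) * X ^ j).coeff k = if k < n then a k else 0 := by
  rw [finset_sum_coeff]
  simp only [coeff_C_mul, coeff_X_pow, mul_ite, mul_one, mul_zero]
  rw [Finset.sum_ite_eq (Finset.range n) k a]
  simp [Finset.mem_range]

theorem mphe_aggregate_noise_bound (n N B : ℕ) (hn : 1 ≤ n) (hN : 1 ≤ N)
    (s epk : Polynomial ℤ) (u e0 e1 : Fin N → Polynomial ℤ)
    (hsdeg : s.degree < n) (hepkdeg : epk.degree < n)
    (hudeg : ∀ i, (u i).degree < n)
    (he0deg : ∀ i, (e0 i).degree < n) (he1deg : ∀ i, (e1 i).degree < n)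
    (hs : inftyNorm s ≤ N)
    (hu : ∀ i j, (u i).coeff j ∈ ({-1, 0, 1} : Set ℤ))
    (hepk : inftyNorm epk ≤ B)
    (he0 : ∀ i, inftyNorm (e0 i) ≤ B) (he1 : ∀ i, inftyNorm (e1 i) ≤ B) :
    inftyNorm ((∑ i, (e0 i + s * e1 i - u i * epk)) %ₘ (X ^ n + 1)) ≤
      B * N * (2 * n * N + 1) := by
  set f := ∑ i, (e0 i + s * e1 i - u i * epk) with hf
  set g : Polynomial ℤ := X ^ n + 1 with hg
  -- coefficient bounds
  have hscoeff : ∀ k, |s.coeff k| ≤ (N : ℤ) :=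
    fun k => (abs_coeff_le_inftyNorm s k).trans (by exact_mod_cast hs)
  have hepkcoeff : ∀ k, |epk.coeff k| ≤ (B : ℤ) :=
    fun k => (abs_coeff_le_inftyNorm epk k).trans (by exact_mod_cast hepk)
  have he0coeff : ∀ i k, |(e0 i).coeff k| ≤ (B : ℤ) :=
    fun i k => (abs_coeff_le_inftyNorm (e0 i) k).trans (by exact_mod_cast he0 i)
  have he1coeff : ∀ i k, |(e1 i).coeff k| ≤ (B : ℤ) :=
    fun i k => (abs_coeff_le_inftyNorm (e1 i) k).trans (by exact_mod_cast he1 i)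
  have hucoeff : ∀ i k, |(u i).coeff k| ≤ ((1 : ℕ) : ℤ) := by
    intro i k
    have h := hu i k
    simp only [Set.mem_insert_iff, Set.mem_singleton_iff] at h
    rcases h with h | h | h <;> simp [h]
  -- f coefficients vanish for k ≥ 2n
  have hf2n : ∀ k, 2 * n ≤ k → f.coeff k = 0 := by
    intro k hk
    rw [hf, finset_sum_coeff]
    apply Finset.sum_eq_zero
    intro i _
    have h0 : (e0 i).coeff k = 0 :=
      coeff_eq_zero_of_degree_lt ((he0deg i).trans_le (by exact_mod_cast by omega : (n : WithBot ℕ) ≤ k))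
    rw [coeff_sub, coeff_add, h0,
      mul_coeff_zero_of_big n s (e1 i) hsdeg (he1deg i) hk,
      mul_coeff_zero_of_big n (u i) epk (hudeg i) hepkdeg hk]
    ring
  -- explicit remainder and quotient
  set r : Polynomial ℤ := ∑ j ∈ Finset.range n, C (f.coeff j - f.coeff (n + j)) * X ^ j with hr
  set qq : Polynomial ℤ := ∑ j ∈ Finset.range n, C (f.coeff (n + j)) * X ^ j with hq
  have hrc : ∀ k, r.coeff k = if k < n then f.coeff k - f.coeff (n + k) else 0 := by
    intro k; rw [hr, coeff_sum_C_mul_X_pow]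
  have hqc : ∀ k, qq.coeff k = if k < n then f.coeff (n + k) else 0 := by
    intro k; rw [hq, coeff_sum_C_mul_X_pow]
  have hgm : g.Monic := by
    rw [hg]
    have := monic_X_pow_add_C (R := ℤ) (1 : ℤ) (by omega : n ≠ 0)
    simpa using this
  have hgdeg : g.degree = n := by
    rw [hg]
    have := degree_X_pow_add_C (R := ℤ) (by omega : 0 < n) (1 : ℤ)
    simpa using this
  have hrdeg : r.degree < g.degree := by
    rw [hgdeg]
    rw [degree_lt_iff_coeff_zero]
    intro m hm
    rw [hrc]
    have : ¬ m < n := by exact_mod_cast not_lt.2 hm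
    simp [this]
  have hid : r + g * qq = f := by
    ext k
    rw [coeff_add, hrc k]
    have hgq : (g * qq).coeff k = (if n ≤ k then qq.coeff (k - n) else 0) + qq.coeff k := by
      rw [hg, add_mul, one_mul, coeff_add, coeff_X_pow_mul']
    rw [hgq, hqc, hqc]
    rcases Nat.lt_or_ge k n with h | h
    · simp [h, not_le.2 h]
    · rcases Nat.lt_or_ge k (2 * n) with h2 | h2
      · have hkn : k - n < n := by omega
        have : n + (k - n) = k := by omega
        simp [h, hkn, not_lt.2 h, this]
      · have h3 : ¬ k - n < n := by omega
        have h4 : ¬ k < n := by omega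
        simp [h, h3, h4, hf2n k (by omega)]
  have hmod : f %ₘ g = r := (div_modByMonic_unique qq r hgm ⟨hid, hrdeg⟩).2
  rw [hmod]
  rw [show inftyNorm r = r.support.sup (fun i => (r.coeff i).natAbs) from rfl]
  -- bound the norm of r
  apply Finset.sup_le
  intro k hk
  rw [← Nat.cast_le (α := ℤ), ← Int.abs_eq_natAbs]
  by_cases hkn : k < n
  · rw [hrc k, if_pos hkn]
    have hcoef : f.coeff k - f.coeff (n + k) =
        ∑ i : Fin N, (((e0 i).coeff k - (e0 i).coeff (n + k))
          + ((s * e1 i).coeff k - (s * e1 i).coeff (n + k))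
          - ((u i * epk).coeff k - (u i * epk).coeff (n + k))) := by
      rw [hf, finset_sum_coeff, finset_sum_coeff, ← Finset.sum_sub_distrib]
      apply Finset.sum_congr rfl
      intro i _
      simp only [coeff_sub, coeff_add]
      ring
    rw [hcoef]
    refine (Finset.abs_sum_le_sum_abs _ _).trans ?_
    have hbound : ∀ i : Fin N,
        |((e0 i).coeff k - (e0 i).coeff (n + k))
          + ((s * e1 i).coeff k - (s * e1 i).coeff (n + k))
          - ((u i * epk).coeff k - (u i * epk).coeff (n + k))|
        ≤ (B : ℤ) + (n : ℤ) * N * B + (n : ℤ) * 1 * B := by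
      intro i
      have hb0 : |(e0 i).coeff k - (e0 i).coeff (n + k)| ≤ (B : ℤ) := by
        have : (e0 i).coeff (n + k) = 0 :=
          coeff_eq_zero_of_degree_lt ((he0deg i).trans_le
            (by exact_mod_cast by omega : (n : WithBot ℕ) ≤ (n + k : ℕ)))
        rw [this, sub_zero]
        exact he0coeff i k
      have hb1 : |(s * e1 i).coeff k - (s * e1 i).coeff (n + k)| ≤ (n : ℤ) * N * B :=
        conv_diff_bound n s (e1 i) N B hsdeg (he1deg i) hscoeff (he1coeff i) hkn
      have hb2 : |(u i * epk).coeff k - (u i * epk).coeff (n + k)| ≤ (n : ℤ) * 1 * B :=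
        conv_diff_bound n (u i) epk 1 B (hudeg i) hepkdeg (hucoeff i) hepkcoeff hkn
      calc _ ≤ |(e0 i).coeff k - (e0 i).coeff (n + k)|
            + |(s * e1 i).coeff k - (s * e1 i).coeff (n + k)|
            + |(u i * epk).coeff k - (u i * epk).coeff (n + k)| := by
              exact (abs_sub _ _).trans (add_le_add_left (abs_add_le _ _) _)
        _ ≤ _ := by gcongr
    refine (Finset.sum_le_card_nsmul _ _ _ (fun i _ => hbound i)).trans ?_
    simp only [Finset.card_univ, Fintype.card_fin, nsmul_eq_mul]
    have h1 : (1 : ℤ) ≤ N := by exact_mod_cast hN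
    push_cast
    have hkey : (0 : ℤ) ≤ (B : ℤ) * n * N * ((N : ℤ) - 1) :=
      mul_nonneg (by positivity) (by linarith)
    nlinarith [hkey]
  · rw [hrc k, if_neg hkn]
    simp
    positivity
end

section
/- Work in the ring R_q = (ℤ/qℤ)[X]/(X^n + 1). Let (c_0, c_1) ∈ R_q² and suppose c_0 + s·c_1 = Δ·m + e_ct for some s, m, e_ct ∈ R_q and integer scalar Δ. Let s'_{a_0}, …, s'_{a_{k-1}} ∈ R_q and scalars r_{a_0}, …, r_{a_{k-1}} satisfy ∑_{i=0}^{k-1} r_{a_i}·s'_{a_i} = s, and define decryption shares h_{a_i} = r_{a_i}·s'_{a_i}·c_1 + e_{a_i} for arbitrary smudging noises e_{a_i} ∈ R_q. Then c_0 + ∑_{i=0}^{k-1} h_{a_i} = Δ·m + e_ct + e_smg, where e_smg = ∑_{i=0}^{k-1} e_{a_i}. Consequently, the recovered plaintext m' = [⌊(p/q)·[c_0 + ∑_i h_{a_i}]⌉]_p equals m whenever ‖e_ct + e_smg‖ < q/(2p). -/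
/-!
Collaborative decryption in `R_q = (ℤ/qℤ)[X]/(X^n + 1)`: if `c₀ + s·c₁ = Δ·m + e_ct` and the
shares `s'_{a_i}` with Lagrange coefficients `r_{a_i}` reconstruct `s = ∑ r_{a_i}·s'_{a_i}`,
then the decryption shares `h_{a_i} = r_{a_i}·s'_{a_i}·c₁ + e_{a_i}` satisfy
`c₀ + ∑ h_{a_i} = Δ·m + e_ct + e_smg` with `e_smg = ∑ e_{a_i}`; consequently the plaintext `m`
is recovered (i.e. `c₀ + ∑ h_{a_i} = Δ·m + e` with `‖e‖ < q/(2p)`) whenever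
`‖e_ct + e_smg‖ < q/(2p)`.
-/

open Polynomial

/-- The ring `R_q = (ℤ/qℤ)[X]/(X^n + 1)`. -/
abbrev Rq (q n : ℕ) := AdjoinRoot ((X : Polynomial (ZMod q)) ^ n + 1)

/-- `X^n + 1` is monic (for `n > 0`). -/
theorem monic_Xn_add_one (q n : ℕ) (hn : 0 < n) :
    ((X : Polynomial (ZMod q)) ^ n + 1).Monic := by
  simpa using Polynomial.monic_X_pow_add_C (a := (1 : ZMod q)) hn.ne'

/-- Infinity norm on `R_q`: the maximum absolute value of the centered coefficient
representatives of the canonical representative of degree `< n`. -/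
noncomputable def RqNorm {q n : ℕ} (hn : 0 < n) (x : Rq q n) : ℕ :=
  (AdjoinRoot.modByMonicHom (monic_Xn_add_one q n hn) x).support.sup fun i =>
    ((AdjoinRoot.modByMonicHom (monic_Xn_add_one q n hn) x).coeff i).valMinAbs.natAbs

theorem rsa_collaborative_decryption (q p n k : ℕ) (hq : 0 < q) (hp : 0 < p) (hn : 0 < n)
    (Δ : ℤ) (c0 c1 s m ect : Rq q n)
    (hct : c0 + s * c1 = (Δ : Rq q n) * m + ect)
    (s' : Fin k → Rq q n) (r : Fin k → ZMod q)
    (hrec : ∑ i, r i • s' i = s)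
    (e : Fin k → Rq q n) (h : Fin k → Rq q n)
    (hh : ∀ i, h i = r i • s' i * c1 + e i) :
    c0 + ∑ i, h i = (Δ : Rq q n) * m + ect + ∑ i, e i ∧
      ((RqNorm hn (ect + ∑ i, e i) : ℝ) < (q : ℝ) / (2 * p) →
        ∃ e' : Rq q n, c0 + ∑ i, h i = (Δ : Rq q n) * m + e' ∧
          (RqNorm hn e' : ℝ) < (q : ℝ) / (2 * p)) := by
  have key : c0 + ∑ i, h i = (Δ : Rq q n) * m + ect + ∑ i, e i := by
    simp only [hh]
    rw [Finset.sum_add_distrib, ← Finset.sum_mul, hrec, ← add_assoc, hct]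
  exact ⟨key, fun hb => ⟨ect + ∑ i, e i, by rw [key]; ring, hb⟩⟩
end

section
/- Let Φ be a random s × d matrix whose entries are independent and identically distributed with ℙ(Φ_{ij} = 1) = ℙ(Φ_{ij} = −1) = p and ℙ(Φ_{ij} = 0) = 1 − 2p, where 0 < p ≤ 1/2. Then E[(ΦᵀΦ)²] = (4p²s(s−1) + 2sp + 4p²s(d−1))·I_d, where I_d is the d × d identity matrix. -/
/-!
Second moment of the random linear compression ensemble: if `Φ` is a random `s × d` matrix with
i.i.d. entries equal to `+1` with probability `p`, `-1` with probability `p`, and `0` with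
probability `1 - 2p`, then `E[(ΦᵀΦ)²] = (4p²s(s-1) + 2sp + 4p²s(d-1))·I_d`.
-/

open MeasureTheory ProbabilityTheory Matrix

/-- The law of a single entry of the compression matrix: `+1` w.p. `p`, `-1` w.p. `p`,
`0` w.p. `1 - 2p`. -/
noncomputable def entryLaw (p : ℝ) : Measure ℝ :=
  ENNReal.ofReal p • Measure.dirac 1 + ENNReal.ofReal p • Measure.dirac (-1) +
    ENNReal.ofReal (1 - 2 * p) • Measure.dirac 0

lemma integrable_dirac'' {g : ℝ → ℝ} (hg : Measurable g) (x : ℝ) :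
    Integrable g (Measure.dirac x) :=
  ⟨hg.aestronglyMeasurable, by
    simp [HasFiniteIntegral, lintegral_dirac' _ hg.enorm]⟩

lemma entryLaw_integral {p : ℝ} (hp : 0 ≤ p) (hp2 : p ≤ 1 / 2) (g : ℝ → ℝ) (hg : Measurable g) :
    ∫ x, g x ∂(entryLaw p) = p * g 1 + p * g (-1) + (1 - 2 * p) * g 0 := by
  have h1 := (integrable_dirac'' hg (1:ℝ)).smul_measure (c := ENNReal.ofReal p) ENNReal.ofReal_ne_top
  have h2 := (integrable_dirac'' hg (-1:ℝ)).smul_measure (c := ENNReal.ofReal p) ENNReal.ofReal_ne_top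
  have h3 := (integrable_dirac'' hg (0:ℝ)).smul_measure (c := ENNReal.ofReal (1 - 2*p)) ENNReal.ofReal_ne_top
  rw [entryLaw, integral_add_measure (h1.add_measure h2) h3, integral_add_measure h1 h2,
    integral_smul_measure, integral_smul_measure, integral_smul_measure,
    integral_dirac, integral_dirac, integral_dirac,
    ENNReal.toReal_ofReal hp, ENNReal.toReal_ofReal (by linarith)]
  simp [smul_eq_mul]

theorem compression_matrix_second_moment
    {Ω : Type*} [MeasurableSpace Ω] (μ : Measure Ω) [IsProbabilityMeasure μ]
    (s d : ℕ) (hs : 0 < s) (hd : 0 < d) (p : ℝ) (hp : 0 < p) (hp2 : p ≤ 1 / 2)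
    (Φ : Ω → Matrix (Fin s) (Fin d) ℝ)
    (hmeas : ∀ i j, Measurable fun ω => Φ ω i j)
    (hindep : iIndepFun (m := fun _ : Fin s × Fin d => (inferInstance : MeasurableSpace ℝ))
      (fun ij ω => Φ ω ij.1 ij.2) μ)
    (hlaw : ∀ i j, Measure.map (fun ω => Φ ω i j) μ = entryLaw p) :
    ∀ a b : Fin d,
      ∫ ω, (((Φ ω)ᵀ * Φ ω) * ((Φ ω)ᵀ * Φ ω)) a b ∂μ =
        (4 * p ^ 2 * s * (s - 1) + 2 * s * p + 4 * p ^ 2 * s * (d - 1)) *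
          (1 : Matrix (Fin d) (Fin d) ℝ) a b := by
  intro a b
  have hmeas' : ∀ u : Fin s × Fin d, Measurable ((fun ij ω => Φ ω ij.1 ij.2) u) :=
    fun u => hmeas u.1 u.2
  -- moments of a single entry
  have hg : ∀ (g : ℝ → ℝ), Measurable g → ∀ (i : Fin s) (j : Fin d),
      ∫ ω, g (Φ ω i j) ∂μ = p * g 1 + p * g (-1) + (1 - 2 * p) * g 0 := by
    intro g hgm i j
    rw [← integral_map (hmeas i j).aemeasurable
        (by rw [hlaw]; exact hgm.aestronglyMeasurable), hlaw]
    exact entryLaw_integral hp.le hp2 g hgm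
  have hmom : ∀ (i : Fin s) (j : Fin d) (k : ℕ), k ≠ 0 →
      ∫ ω, (Φ ω i j) ^ k ∂μ = p + p * (-1) ^ k := by
    intro i j k hk
    have := hg (fun x => x ^ k) (measurable_id.pow_const k) i j
    simpa [zero_pow hk] using this
  have hmom1 : ∀ (i : Fin s) (j : Fin d), ∫ ω, Φ ω i j ∂μ = 0 := by
    intro i j
    have := hmom i j 1 one_ne_zero
    simpa using this
  have hmom2 : ∀ (i : Fin s) (j : Fin d), ∫ ω, (Φ ω i j) ^ 2 ∂μ = 2 * p := by
    intro i j; rw [hmom i j 2 two_ne_zero]; ring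
  -- a.e. bound on entries
  have hbd : ∀ (i : Fin s) (j : Fin d), ∀ᵐ ω ∂μ, |Φ ω i j| ≤ 1 := by
    intro i j
    rw [ae_iff]
    have hSm : MeasurableSet {x : ℝ | ¬ |x| ≤ 1} :=
      (measurableSet_le (measurable_abs) measurable_const).compl
    have : {ω | ¬ |Φ ω i j| ≤ 1} = (fun ω => Φ ω i j) ⁻¹' {x : ℝ | ¬ |x| ≤ 1} := rfl
    rw [this, ← Measure.map_apply (hmeas i j) hSm, hlaw, entryLaw]
    simp [Measure.dirac_apply' _ hSm, Set.indicator_apply, abs_of_nonneg]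
  -- integrability of products of four entries
  have hint4 : ∀ (i j : Fin s) (c : Fin d),
      Integrable (fun ω => Φ ω i a * Φ ω i c * (Φ ω j c * Φ ω j b)) μ := by
    intro i j c
    refine Integrable.mono' (integrable_const 1)
      (((hmeas i a).mul (hmeas i c)).mul ((hmeas j c).mul (hmeas j b))).aestronglyMeasurable ?_
    filter_upwards [hbd i a, hbd i c, hbd j c, hbd j b] with ω h1 h2 h3 h4
    simp only [Real.norm_eq_abs, abs_mul]
    exact mul_le_one₀ (mul_le_one₀ h1 (abs_nonneg _) h2) (by positivity)
      (mul_le_one₀ h3 (abs_nonneg _) h4)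
  -- product of two entries at distinct index pairs
  have hpair : ∀ (u v : Fin s × Fin d), u ≠ v → ∀ (g h : ℝ → ℝ),
      Measurable g → Measurable h →
      ∫ ω, g (Φ ω u.1 u.2) * h (Φ ω v.1 v.2) ∂μ =
        (∫ ω, g (Φ ω u.1 u.2) ∂μ) * ∫ ω, h (Φ ω v.1 v.2) ∂μ := by
    intro u v huv g h hgm hhm
    exact ((hindep.indepFun huv).comp hgm hhm).integral_fun_mul_eq_mul_integral
      (hgm.comp (hmeas u.1 u.2)).aestronglyMeasurable
      (hhm.comp (hmeas v.1 v.2)).aestronglyMeasurable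
  have hE2 : ∀ (i : Fin s) (x y : Fin d),
      ∫ ω, Φ ω i x * Φ ω i y ∂μ = if x = y then 2 * p else 0 := by
    intro i x y
    by_cases hxy : x = y
    · subst hxy
      simp only [if_pos rfl]
      rw [← hmom2 i x]
      congr 1; ext ω; ring
    · rw [if_neg hxy]
      have h := hpair (i, x) (i, y) (by simp [hxy]) (fun t => t) (fun t => t)
        measurable_id measurable_id
      refine h.trans ?_
      show (∫ ω, Φ ω i x ∂μ) * (∫ ω, Φ ω i y ∂μ) = 0
      rw [hmom1, zero_mul]
  -- value of each term
  have hterm : ∀ (c : Fin d) (i j : Fin s),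
      ∫ ω, Φ ω i a * Φ ω i c * (Φ ω j c * Φ ω j b) ∂μ =
        if i = j then (if a = b then (if c = a then 2 * p else 4 * p ^ 2) else 0)
        else (if a = c then 2 * p else 0) * (if c = b then 2 * p else 0) := by
    intro c i j
    by_cases hij : i = j
    · subst hij
      rw [if_pos rfl]
      by_cases hab : a = b
      · subst hab
        rw [if_pos rfl]
        by_cases hca : c = a
        · subst hca
          rw [if_pos rfl]
          have heq : ∀ ω, Φ ω i c * Φ ω i c * (Φ ω i c * Φ ω i c) = (Φ ω i c) ^ 4 := by
            intro ω; ring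
          simp_rw [heq]
          rw [hmom i c 4 (by norm_num)]; ring
        · rw [if_neg hca]
          have heq : ∀ ω, Φ ω i a * Φ ω i c * (Φ ω i c * Φ ω i a) =
              (Φ ω i a) ^ 2 * (Φ ω i c) ^ 2 := by intro ω; ring
          simp_rw [heq]
          have h := hpair (i, a) (i, c) (by simp [Ne.symm hca]) (fun t => t ^ 2) (fun t => t ^ 2)
            (measurable_id.pow_const 2) (measurable_id.pow_const 2)
          refine h.trans ?_
          show (∫ ω, (Φ ω i a) ^ 2 ∂μ) * (∫ ω, (Φ ω i c) ^ 2 ∂μ) = 4 * p ^ 2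
          rw [hmom2, hmom2]; ring
      · rw [if_neg hab]
        by_cases hca : c = a
        · subst hca
          have heq : ∀ ω, Φ ω i c * Φ ω i c * (Φ ω i c * Φ ω i b) =
              (Φ ω i c) ^ 3 * Φ ω i b := by intro ω; ring
          simp_rw [heq]
          have h := hpair (i, c) (i, b) (by simp [hab]) (fun t => t ^ 3) (fun t => t)
            (measurable_id.pow_const 3) measurable_id
          refine h.trans ?_
          show (∫ ω, (Φ ω i c) ^ 3 ∂μ) * (∫ ω, Φ ω i b ∂μ) = 0
          rw [hmom1, mul_zero]
        · by_cases hcb : c = b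
          · subst hcb
            have heq : ∀ ω, Φ ω i a * Φ ω i c * (Φ ω i c * Φ ω i c) =
                Φ ω i a * (Φ ω i c) ^ 3 := by intro ω; ring
            simp_rw [heq]
            have h := hpair (i, a) (i, c) (by simp [hab]) (fun t => t) (fun t => t ^ 3)
              measurable_id (measurable_id.pow_const 3)
            refine h.trans ?_
            show (∫ ω, Φ ω i a ∂μ) * (∫ ω, (Φ ω i c) ^ 3 ∂μ) = 0
            rw [hmom1, zero_mul]
          · -- three distinct entries in row i : a, b, c
            have hIF : IndepFun (fun ω => (Φ ω i a, Φ ω i b)) (fun ω => Φ ω i c) μ :=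
              hindep.indepFun_prodMk hmeas' (i, a) (i, b) (i, c)
                (by simp [Ne.symm hca]) (by simp [Ne.symm hcb])
            have hIF2 : IndepFun (fun ω => Φ ω i a * Φ ω i b)
                (fun ω => (Φ ω i c) ^ 2) μ :=
              hIF.comp (measurable_fst.mul measurable_snd) (measurable_id.pow_const 2)
            have heq : ∀ ω, Φ ω i a * Φ ω i c * (Φ ω i c * Φ ω i b) =
                (Φ ω i a * Φ ω i b) * (Φ ω i c) ^ 2 := by intro ω; ring
            simp_rw [heq]
            rw [hIF2.integral_fun_mul_eq_mul_integral ((hmeas i a).mul (hmeas i b)).aestronglyMeasurable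
              ((hmeas i c).pow_const 2).aestronglyMeasurable]
            rw [hE2 i a b, if_neg hab, zero_mul]
    · -- i ≠ j : the two row-pairs are independent
      rw [if_neg hij]
      have hIF : IndepFun (fun ω => (Φ ω i a, Φ ω i c)) (fun ω => (Φ ω j c, Φ ω j b)) μ :=
        hindep.indepFun_prodMk_prodMk hmeas' (i, a) (i, c) (j, c) (j, b)
          (by simp [hij]) (by simp [hij]) (by simp [hij]) (by simp [hij])
      have hIF2 : IndepFun (fun ω => Φ ω i a * Φ ω i c) (fun ω => Φ ω j c * Φ ω j b) μ :=
        hIF.comp (measurable_fst.mul measurable_snd) (measurable_fst.mul measurable_snd)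
      rw [hIF2.integral_fun_mul_eq_mul_integral ((hmeas i a).mul (hmeas i c)).aestronglyMeasurable
        ((hmeas j c).mul (hmeas j b)).aestronglyMeasurable, hE2, hE2]
  -- expand the matrix entry
  have hexp : ∀ ω, (((Φ ω)ᵀ * Φ ω) * ((Φ ω)ᵀ * Φ ω)) a b =
      ∑ c : Fin d, ∑ i : Fin s, ∑ j : Fin s,
        Φ ω i a * Φ ω i c * (Φ ω j c * Φ ω j b) := by
    intro ω
    simp only [Matrix.mul_apply, Matrix.transpose_apply, Finset.sum_mul, Finset.mul_sum]
    exact Finset.sum_congr rfl fun c _ => Finset.sum_comm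
  have lhs_eq : ∫ ω, (((Φ ω)ᵀ * Φ ω) * ((Φ ω)ᵀ * Φ ω)) a b ∂μ =
      ∑ c : Fin d, ∑ i : Fin s, ∑ j : Fin s,
        ∫ ω, Φ ω i a * Φ ω i c * (Φ ω j c * Φ ω j b) ∂μ := by
    simp_rw [hexp]
    rw [integral_finset_sum _ fun c _ => integrable_finset_sum _ fun i _ =>
      integrable_finset_sum _ fun j _ => hint4 i j c]
    refine Finset.sum_congr rfl fun c _ => ?_
    rw [integral_finset_sum _ fun i _ => integrable_finset_sum _ fun j _ => hint4 i j c]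
    exact Finset.sum_congr rfl fun i _ =>
      integral_finset_sum _ fun j _ => hint4 i j c
  rw [lhs_eq]
  simp_rw [hterm]
  -- inner double sum over i, j
  have hsum2 : ∀ (A B : ℝ), (∑ i : Fin s, ∑ j : Fin s, if i = j then A else B) =
      (s : ℝ) * A + ((s : ℝ) * s - s) * B := by
    intro A B
    have h1 : ∀ i j : Fin s, (if i = j then A else B) = B + (if j = i then A - B else 0) := by
      intro i j
      rcases eq_or_ne i j with h | h
      · subst h; rw [if_pos rfl, if_pos rfl]; ring
      · rw [if_neg h, if_neg (fun hh => h hh.symm)]; ring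
    simp only [h1, Finset.sum_add_distrib, Finset.sum_const, Finset.sum_ite_eq' Finset.univ,
      Finset.mem_univ, if_true, Finset.card_univ, Fintype.card_fin, smul_eq_mul]
    push_cast
    ring
  simp_rw [hsum2]
  by_cases hab : a = b
  · subst hab
    rw [Matrix.one_apply_eq]
    have h2 : ∀ c : Fin d,
        ((s : ℝ) * (if a = a then (if c = a then 2 * p else 4 * p ^ 2) else 0) +
          ((s : ℝ) * s - s) * ((if a = c then 2 * p else 0) * (if c = a then 2 * p else 0))) =
        (if c = a then ((s : ℝ) * (2 * p) + ((s : ℝ) * s - s) * (4 * p ^ 2)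
            - (s : ℝ) * (4 * p ^ 2)) else 0) + (s : ℝ) * (4 * p ^ 2) := by
      intro c
      rw [if_pos rfl]
      rcases eq_or_ne c a with h | h
      · subst h; simp only [eq_self_iff_true, if_true]; ring
      · rw [if_neg h, if_neg (fun hh => h hh.symm), if_neg h, if_neg h]; ring
    rw [Finset.sum_congr rfl fun c _ => h2 c]
    simp only [Finset.sum_add_distrib, Finset.sum_ite_eq' Finset.univ, Finset.mem_univ,
      if_true, Finset.sum_const, Finset.card_univ, Fintype.card_fin, nsmul_eq_mul]
    push_cast
    ring
  · rw [Matrix.one_apply_ne hab, mul_zero]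
    have h2 : ∀ c : Fin d,
        ((s : ℝ) * (if a = b then (if c = a then 2 * p else 4 * p ^ 2) else 0) +
          ((s : ℝ) * s - s) * ((if a = c then 2 * p else 0) * (if c = b then 2 * p else 0))) = 0 := by
      intro c
      rcases eq_or_ne a c with h | h
      · subst h; simp [hab]
      · simp [hab, h]
    rw [Finset.sum_congr rfl fun c _ => h2 c, Finset.sum_const_zero]
end

section
/- Let Φ be a random s × d matrix whose entries are independent and identically distributed with ℙ(Φ_{ij} = 1) = ℙ(Φ_{ij} = −1) = p and ℙ(Φ_{ij} = 0) = 1 − 2p, where 0 < p ≤ 1/2. Set α = 2sp and r = d/s. Then for every g ∈ ℝ^d, E‖(1/α)·ΦᵀΦg‖₂² ≤ (r + 1 + 1/α)·‖g‖₂². -/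
/-!
Variance bound for the random linear compressor: if `Φ` is a random `s × d` matrix with i.i.d.
entries `+1` w.p. `p`, `-1` w.p. `p`, `0` w.p. `1 - 2p`, and `α = 2sp`, `r = d/s`, then for
every `g ∈ ℝ^d`, `E‖(1/α)·ΦᵀΦg‖₂² ≤ (r + 1 + 1/α)·‖g‖₂²`.
-/

open MeasureTheory ProbabilityTheory Matrix

lemma integrable_smul_dirac (f : ℝ → ℝ) (c x : ℝ) :
    Integrable f (ENNReal.ofReal c • Measure.dirac x) := by
  refine Integrable.smul_measure ?_ ENNReal.ofReal_ne_top
  have h : f =ᵐ[Measure.dirac x] fun _ => f x := by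
    rw [Filter.EventuallyEq, ae_dirac_eq]; simp
  exact (integrable_const (f x)).congr h.symm

lemma integral_entryLaw (p : ℝ) (hp : 0 ≤ p) (hp2 : p ≤ 1 / 2) (f : ℝ → ℝ) :
    ∫ x, f x ∂(entryLaw p) = p * f 1 + p * f (-1) + (1 - 2 * p) * f 0 := by
  unfold entryLaw
  rw [integral_add_measure (Integrable.add_measure (integrable_smul_dirac f p 1)
      (integrable_smul_dirac f p (-1))) (integrable_smul_dirac f _ 0),
    integral_add_measure (integrable_smul_dirac f p 1) (integrable_smul_dirac f p (-1))]
  simp only [integral_smul_measure, integral_dirac, smul_eq_mul]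
  rw [ENNReal.toReal_ofReal hp, ENNReal.toReal_ofReal (by linarith)]

lemma ae_abs_le_entryLaw (p : ℝ) : ∀ᵐ x ∂(entryLaw p), |x| ≤ 1 := by
  rw [ae_iff]
  have hms : MeasurableSet {x : ℝ | ¬ |x| ≤ 1} :=
    (measurableSet_le measurable_abs measurable_const).compl
  unfold entryLaw
  simp only [Measure.add_apply, Measure.smul_apply, smul_eq_mul]
  rw [Measure.dirac_apply' _ hms, Measure.dirac_apply' _ hms, Measure.dirac_apply' _ hms]
  have h1 : (1:ℝ) ∉ {x : ℝ | ¬ |x| ≤ 1} := by norm_num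
  have h2 : (-1:ℝ) ∉ {x : ℝ | ¬ |x| ≤ 1} := by norm_num
  have h3 : (0:ℝ) ∉ {x : ℝ | ¬ |x| ≤ 1} := by norm_num
  rw [Set.indicator_of_notMem h1, Set.indicator_of_notMem h2, Set.indicator_of_notMem h3]
  simp

theorem compression_matrix_variance_bound
    {Ω : Type*} [MeasurableSpace Ω] (μ : Measure Ω) [IsProbabilityMeasure μ]
    (s d : ℕ) (hs : 0 < s) (hd : 0 < d) (p : ℝ) (hp : 0 < p) (hp2 : p ≤ 1 / 2)
    (Φ : Ω → Matrix (Fin s) (Fin d) ℝ)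
    (hmeas : ∀ i j, Measurable fun ω => Φ ω i j)
    (hindep : iIndepFun
      (fun (ij : Fin s × Fin d) ω => Φ ω ij.1 ij.2) μ)
    (hlaw : ∀ i j, Measure.map (fun ω => Φ ω i j) μ = entryLaw p)
    (α r : ℝ) (hα : α = 2 * s * p) (hr : r = (d : ℝ) / s) :
    ∀ g : Fin d → ℝ,
      ∫ ω, ∑ a, (((1 / α) • ((Φ ω)ᵀ *ᵥ (Φ ω *ᵥ g))) a) ^ 2 ∂μ ≤
        (r + 1 + 1 / α) * ∑ a, g a ^ 2 := by
  intro g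
  have hXm : ∀ ij : Fin s × Fin d, Measurable ((fun ij (ω : Ω) => Φ ω ij.1 ij.2) ij) :=
    fun ij => hmeas ij.1 ij.2
  -- a.e. bound on entries
  have habs : ∀ i j, ∀ᵐ ω ∂μ, |Φ ω i j| ≤ 1 := by
    intro i j
    have := ae_abs_le_entryLaw p
    rw [← hlaw i j] at this
    exact ae_of_ae_map (hmeas i j).aemeasurable this
  -- integrability of bounded measurable functions
  have hintb : ∀ f : Ω → ℝ, Measurable f → (∀ᵐ ω ∂μ, |f ω| ≤ 1) → Integrable f μ := by
    intro f hf hb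
    exact (integrable_const (1:ℝ)).mono' hf.aestronglyMeasurable
      (by simpa [Real.norm_eq_abs] using hb)
  have hIntF : ∀ (a : Fin d) (i : Fin s) (b : Fin d) (i' : Fin s) (b' : Fin d),
      Integrable (fun ω => (Φ ω i a * Φ ω i b) * (Φ ω i' a * Φ ω i' b')) μ := by
    intro a i b i' b'
    refine hintb _ (by fun_prop) ?_
    filter_upwards [habs i a, habs i b, habs i' a, habs i' b'] with ω h1 h2 h3 h4
    have : |(Φ ω i a * Φ ω i b) * (Φ ω i' a * Φ ω i' b')|
        = |Φ ω i a| * |Φ ω i b| * (|Φ ω i' a| * |Φ ω i' b'|) := by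
      rw [abs_mul, abs_mul, abs_mul]
    rw [this]
    calc |Φ ω i a| * |Φ ω i b| * (|Φ ω i' a| * |Φ ω i' b'|) ≤ 1 * 1 * (1 * 1) := by
          gcongr <;> positivity
      _ = 1 := by norm_num
  -- moments
  have hmom : ∀ (i : Fin s) (j : Fin d) (k : ℕ),
      ∫ ω, (Φ ω i j) ^ k ∂μ = p + p * (-1 : ℝ) ^ k + (1 - 2 * p) * (0 : ℝ) ^ k := by
    intro i j k
    have : ∫ ω, (Φ ω i j) ^ k ∂μ = ∫ x, x ^ k ∂(Measure.map (fun ω => Φ ω i j) μ) := by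
      rw [integral_map (hmeas i j).aemeasurable
        ((by fun_prop : Measurable fun x : ℝ => x ^ k).aestronglyMeasurable)]
    rw [this, hlaw i j, integral_entryLaw p hp.le hp2]
    simp
  have hm1 : ∀ (i : Fin s) (j : Fin d), ∫ ω, Φ ω i j ∂μ = 0 := by
    intro i j; have := hmom i j 1; norm_num at this; simpa using this
  have hm2 : ∀ (i : Fin s) (j : Fin d), ∫ ω, (Φ ω i j) ^ 2 ∂μ = 2 * p := by
    intro i j; have := hmom i j 2; norm_num at this; linarith
  have hm3 : ∀ (i : Fin s) (j : Fin d), ∫ ω, (Φ ω i j) ^ 3 ∂μ = 0 := by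
    intro i j; have := hmom i j 3; norm_num at this; linarith
  have hm4 : ∀ (i : Fin s) (j : Fin d), ∫ ω, (Φ ω i j) ^ 4 ∂μ = 2 * p := by
    intro i j; have := hmom i j 4; norm_num at this; linarith
  -- pair expectations within a row
  have pairE : ∀ (i : Fin s) (a b : Fin d),
      ∫ ω, Φ ω i a * Φ ω i b ∂μ = if a = b then 2 * p else 0 := by
    intro i a b
    by_cases hab : a = b
    · subst hab
      rw [if_pos rfl,
        show (fun ω => Φ ω i a * Φ ω i a) = fun ω => (Φ ω i a) ^ 2 from funext fun ω => by ring]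
      exact hm2 i a
    · rw [if_neg hab]
      have hind : IndepFun (fun ω => Φ ω i a) (fun ω => Φ ω i b) μ :=
        hindep.indepFun (by simp [hab] : ((i, a) : Fin s × Fin d) ≠ (i, b))
      have := hind.integral_mul_eq_mul_integral (hmeas i a).aestronglyMeasurable
        (hmeas i b).aestronglyMeasurable
      exact this.trans (by rw [hm1 i a]; ring)
  -- the four-entry expectation, in indicator-arithmetic form
  have hE4 : ∀ (a : Fin d) (i : Fin s) (b : Fin d) (i' : Fin s) (b' : Fin d),
      ∫ ω, (Φ ω i a * Φ ω i b) * (Φ ω i' a * Φ ω i' b') ∂μ =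
        (if b = a then (1:ℝ) else 0) * (if b' = a then 1 else 0) * (4 * p ^ 2)
          + (if i = i' then (1:ℝ) else 0) * ((if b = b' then (1:ℝ) else 0) * (4 * p ^ 2)
            + (if b = a then (1:ℝ) else 0) * (if b' = a then 1 else 0) * (2 * p - 8 * p ^ 2)) := by
    intro a i b i' b'
    by_cases hii : i = i'
    · subst hii
      by_cases hba : b = a
      · subst hba
        by_cases hb'a : b' = b
        · subst hb'a
          rw [show (fun ω => (Φ ω i b' * Φ ω i b') * (Φ ω i b' * Φ ω i b'))
              = fun ω => (Φ ω i b') ^ 4 from funext fun ω => by ring, hm4 i b']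
          simp; ring
        · -- E[X^3 Y] = 0
          rw [show (fun ω => (Φ ω i b * Φ ω i b) * (Φ ω i b * Φ ω i b'))
              = fun ω => (Φ ω i b) ^ 3 * Φ ω i b' from funext fun ω => by ring]
          have hind : IndepFun (fun ω => (Φ ω i b) ^ 3) (fun ω => Φ ω i b') μ := by
            have h := hindep.indepFun (by simp [Ne.symm hb'a] :
              ((i, b) : Fin s × Fin d) ≠ (i, b'))
            exact h.comp (by fun_prop : Measurable fun x : ℝ => x ^ 3) measurable_id
          have := hind.integral_mul_eq_mul_integral (by fun_prop : Measurable fun ω => (Φ ω i b) ^ 3).aestronglyMeasurable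
            (hmeas i b').aestronglyMeasurable
          refine this.trans ?_
          rw [hm3 i b]
          simp [hb'a, Ne.symm hb'a]
      · by_cases hb'a : b' = a
        · subst hb'a
          rw [show (fun ω => (Φ ω i b' * Φ ω i b) * (Φ ω i b' * Φ ω i b'))
              = fun ω => (Φ ω i b') ^ 3 * Φ ω i b from funext fun ω => by ring]
          have hind : IndepFun (fun ω => (Φ ω i b') ^ 3) (fun ω => Φ ω i b) μ := by
            have h := hindep.indepFun (by simp [Ne.symm hba] :
              ((i, b') : Fin s × Fin d) ≠ (i, b))
            exact h.comp (by fun_prop : Measurable fun x : ℝ => x ^ 3) measurable_id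
          have := hind.integral_mul_eq_mul_integral (by fun_prop : Measurable fun ω => (Φ ω i b') ^ 3).aestronglyMeasurable
            (hmeas i b).aestronglyMeasurable
          refine this.trans ?_
          rw [hm3 i b']
          simp [hba]
        · by_cases hbb' : b = b'
          · subst hbb'
            rw [show (fun ω => (Φ ω i a * Φ ω i b) * (Φ ω i a * Φ ω i b))
                = fun ω => (Φ ω i a) ^ 2 * (Φ ω i b) ^ 2 from funext fun ω => by ring]
            have hind : IndepFun (fun ω => (Φ ω i a) ^ 2) (fun ω => (Φ ω i b) ^ 2) μ := by
              have h := hindep.indepFun (by simp [Ne.symm hba] :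
                ((i, a) : Fin s × Fin d) ≠ (i, b))
              exact h.comp (by fun_prop : Measurable fun x : ℝ => x ^ 2)
                (by fun_prop : Measurable fun x : ℝ => x ^ 2)
            have := hind.integral_mul_eq_mul_integral
              (by fun_prop : Measurable fun ω => (Φ ω i a) ^ 2).aestronglyMeasurable
              (by fun_prop : Measurable fun ω => (Φ ω i b) ^ 2).aestronglyMeasurable
            refine this.trans ?_
            rw [hm2 i a, hm2 i b]
            simp [hba]; ring
          · -- all of a, b, b' distinct : E[X_b X_b'] E[X_a^2] = 0
            rw [show (fun ω => (Φ ω i a * Φ ω i b) * (Φ ω i a * Φ ω i b'))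
                = fun ω => (Φ ω i b * Φ ω i b') * (Φ ω i a) ^ 2 from funext fun ω => by ring]
            have hind0 : IndepFun
                ((fun ij (ω : Ω) => Φ ω ij.1 ij.2) (i, b) * (fun ij (ω : Ω) => Φ ω ij.1 ij.2) (i, b'))
                ((fun ij (ω : Ω) => Φ ω ij.1 ij.2) (i, a)) μ :=
              hindep.indepFun_mul_left hXm (i, b) (i, b') (i, a)
                (by simp [hba]) (by simp [hb'a])
            have hind : IndepFun (fun ω => Φ ω i b * Φ ω i b') (fun ω => (Φ ω i a) ^ 2) μ :=
              hind0.comp measurable_id (by fun_prop : Measurable fun x : ℝ => x ^ 2)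
            have := hind.integral_mul_eq_mul_integral
              (by fun_prop : Measurable fun ω => Φ ω i b * Φ ω i b').aestronglyMeasurable
              (by fun_prop : Measurable fun ω => (Φ ω i a) ^ 2).aestronglyMeasurable
            refine this.trans ?_
            have h0 : ∫ ω, Φ ω i b * Φ ω i b' ∂μ = 0 := by rw [pairE i b b', if_neg hbb']
            rw [show (∫ ω, ((fun ω => Φ ω i b * Φ ω i b') * fun ω => (Φ ω i a) ^ 2) ω ∂μ)
              = (∫ ω, Φ ω i b * Φ ω i b' ∂μ) * ∫ ω, (Φ ω i a) ^ 2 ∂μ from this] at this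
            rw [h0]
            simp [hba, hb'a, hbb']
    · -- different rows : factorizes
      have hind0 : IndepFun
          ((fun ij (ω : Ω) => Φ ω ij.1 ij.2) (i, a) * (fun ij (ω : Ω) => Φ ω ij.1 ij.2) (i, b))
          ((fun ij (ω : Ω) => Φ ω ij.1 ij.2) (i', a) * (fun ij (ω : Ω) => Φ ω ij.1 ij.2) (i', b'))
          μ :=
        hindep.indepFun_mul_mul hXm (i, a) (i, b) (i', a) (i', b')
          (by simp [hii]) (by simp [hii]) (by simp [hii]) (by simp [hii])
      have hind : IndepFun (fun ω => Φ ω i a * Φ ω i b)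
          (fun ω => Φ ω i' a * Φ ω i' b') μ := hind0
      have := hind.integral_mul_eq_mul_integral
        (by fun_prop : Measurable fun ω => Φ ω i a * Φ ω i b).aestronglyMeasurable
        (by fun_prop : Measurable fun ω => Φ ω i' a * Φ ω i' b').aestronglyMeasurable
      refine this.trans ?_
      have hab : ∀ x y : Fin d, (if x = y then (2*p:ℝ) else 0)
          = (if y = x then (1:ℝ) else 0) * (2*p) := by
        intro x y
        by_cases h : x = y
        · subst h; simp
        · rw [if_neg h, if_neg (Ne.symm h)]; ring
      rw [pairE i a b, pairE i' a b', if_neg hii, hab, hab]; ring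
  -- expand the square into a quadruple sum, pointwise
  have hpt : ∀ ω, ∑ a, (((1 / α) • ((Φ ω)ᵀ *ᵥ (Φ ω *ᵥ g))) a) ^ 2
      = (1/α)^2 * ∑ a, ∑ q : Fin s × Fin d, ∑ q' : Fin s × Fin d,
          (g q.2 * g q'.2) * ((Φ ω q.1 a * Φ ω q.1 q.2) * (Φ ω q'.1 a * Φ ω q'.1 q'.2)) := by
    intro ω
    rw [Finset.mul_sum]
    refine Finset.sum_congr rfl fun a _ => ?_
    simp only [Pi.smul_apply, smul_eq_mul, mulVec, dotProduct, transpose_apply]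
    rw [mul_pow]
    congr 1
    have h1 : (∑ i, Φ ω i a * ∑ b, Φ ω i b * g b)
        = ∑ q : Fin s × Fin d, Φ ω q.1 a * (Φ ω q.1 q.2 * g q.2) := by
      rw [Fintype.sum_prod_type]
      exact Finset.sum_congr rfl fun i _ => by rw [Finset.mul_sum]
    rw [sq, h1, Finset.sum_mul_sum]
    exact Finset.sum_congr rfl fun q _ => Finset.sum_congr rfl fun q' _ => by ring
  simp only [hpt]
  rw [integral_const_mul]
  have hIntT : ∀ (a : Fin d) (q q' : Fin s × Fin d),
      Integrable (fun ω => (g q.2 * g q'.2)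
        * ((Φ ω q.1 a * Φ ω q.1 q.2) * (Φ ω q'.1 a * Φ ω q'.1 q'.2))) μ :=
    fun a q q' => (hIntF a q.1 q.2 q'.1 q'.2).const_mul _
  rw [integral_finset_sum _ (fun a _ => integrable_finset_sum _
    (fun q _ => integrable_finset_sum _ (fun q' _ => hIntT a q q')))]
  have hinner : ∀ a : Fin d, ∫ ω, ∑ q : Fin s × Fin d, ∑ q' : Fin s × Fin d,
      (g q.2 * g q'.2) * ((Φ ω q.1 a * Φ ω q.1 q.2) * (Φ ω q'.1 a * Φ ω q'.1 q'.2)) ∂μ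
      = ∑ q : Fin s × Fin d, ∑ q' : Fin s × Fin d, (g q.2 * g q'.2) *
          ((if q.2 = a then (1:ℝ) else 0) * (if q'.2 = a then 1 else 0) * (4 * p ^ 2)
            + (if q.1 = q'.1 then (1:ℝ) else 0) * ((if q.2 = q'.2 then (1:ℝ) else 0) * (4 * p ^ 2)
              + (if q.2 = a then (1:ℝ) else 0) * (if q'.2 = a then 1 else 0)
                * (2 * p - 8 * p ^ 2))) := by
    intro a
    rw [integral_finset_sum _ (fun q _ => integrable_finset_sum _ (fun q' _ => hIntT a q q'))]
    refine Finset.sum_congr rfl fun q _ => ?_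
    rw [integral_finset_sum _ (fun q' _ => hIntT a q q')]
    refine Finset.sum_congr rfl fun q' _ => ?_
    rw [integral_const_mul, hE4 a q.1 q.2 q'.1 q'.2]
  simp only [hinner]
  -- compute the big sum
  have hsum : ∑ a : Fin d, ∑ q : Fin s × Fin d, ∑ q' : Fin s × Fin d, (g q.2 * g q'.2) *
      ((if q.2 = a then (1:ℝ) else 0) * (if q'.2 = a then 1 else 0) * (4 * p ^ 2)
        + (if q.1 = q'.1 then (1:ℝ) else 0) * ((if q.2 = q'.2 then (1:ℝ) else 0) * (4 * p ^ 2)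
          + (if q.2 = a then (1:ℝ) else 0) * (if q'.2 = a then 1 else 0) * (2 * p - 8 * p ^ 2)))
      = (4 * p^2 * (s:ℝ)^2 + 4 * p^2 * s * d + (2 * p - 8 * p^2) * s) * ∑ a, g a ^ 2 := by
    simp only [Fintype.sum_prod_type]
    simp only [mul_add, mul_ite, ite_mul, one_mul, zero_mul, mul_one, mul_zero,
      Finset.sum_add_distrib, Finset.sum_ite_eq, Finset.sum_ite_eq', Finset.mem_univ,
      if_true, Finset.sum_const, Finset.card_univ, Fintype.card_fin, nsmul_eq_mul,
      Finset.mul_sum, Finset.sum_mul]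
    have h3 : ∀ (x x_2 : Fin d) (x_1 : Fin s),
        (∑ x_3 : Fin s, if x_2 = x then if x_1 = x_3 then
            g x_2 * g x * (2 * p - 8 * p ^ 2) else 0 else 0)
          = if x_2 = x then g x_2 * g x * (2 * p - 8 * p ^ 2) else 0 := by
      intro x x2 x1
      split_ifs with h
      · simp [Finset.sum_ite_eq]
      · simp
    simp only [h3, Finset.sum_ite_eq', Finset.mem_univ, if_true, Finset.sum_const,
      Finset.card_univ, Fintype.card_fin, nsmul_eq_mul]
    rw [← Finset.sum_add_distrib, ← Finset.sum_add_distrib]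
    refine Finset.sum_congr rfl fun x _ => by ring
  rw [hsum]
  -- final arithmetic
  have hG : 0 ≤ ∑ a, g a ^ 2 := Finset.sum_nonneg fun a _ => sq_nonneg _
  have hsp : (0:ℝ) < s := by exact_mod_cast hs
  have hαpos : 0 < α := by rw [hα]; positivity
  have key : (1/α)^2 * (4 * p^2 * (s:ℝ)^2 + 4 * p^2 * s * d + (2 * p - 8 * p^2) * s)
      = r + 1 + 1/α - 2/s := by
    rw [hα, hr]
    field_simp
    ring
  have h2s : 0 ≤ (2/(s:ℝ)) * ∑ a, g a ^ 2 :=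
    mul_nonneg (by positivity) hG
  calc (1/α)^2 * ((4 * p^2 * (s:ℝ)^2 + 4 * p^2 * s * d + (2 * p - 8 * p^2) * s) * ∑ a, g a ^ 2)
      = ((1/α)^2 * (4 * p^2 * (s:ℝ)^2 + 4 * p^2 * s * d + (2 * p - 8 * p^2) * s)) * ∑ a, g a ^ 2 := by
        ring
    _ = (r + 1 + 1/α - 2/s) * ∑ a, g a ^ 2 := by rw [key]
    _ ≤ (r + 1 + 1/α) * ∑ a, g a ^ 2 := by nlinarith [h2s]
end

section
/- Let Φ be a random s × d matrix whose entries are independent and identically distributed with ℙ(Φ_{ij} = 1) = ℙ(Φ_{ij} = −1) = p and ℙ(Φ_{ij} = 0) = 1 − 2p, where 0 < p ≤ 1/2. Set α = 2sp and r = d/s. Then for every g ∈ ℝ^d, E‖Φg‖₁ ≥ (α/(αr + 1))·‖g‖₁, where ‖·‖₁ denotes the ℓ¹ norm. -/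
/-!
ℓ¹-norm preservation of the random linear compressor: if `Φ` is a random `s × d` matrix with
i.i.d. entries `+1` w.p. `p`, `-1` w.p. `p`, `0` w.p. `1 - 2p`, and `α = 2sp`, `r = d/s`, then
for every `g ∈ ℝ^d`, `E‖Φg‖₁ ≥ (α/(αr + 1))·‖g‖₁`.
-/

open MeasureTheory ProbabilityTheory Matrix

namespace CompressionAux

noncomputable def wt (p : ℝ) : Fin 3 → ℝ := ![p, p, 1 - 2*p]
noncomputable def sg : Fin 3 → ℝ := ![1, -1, 0]

noncomputable def Fsum (p : ℝ) (n : ℕ) (g : Fin n → ℝ) : ℝ :=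
  ∑ x : Fin n → Fin 3, (∏ j, wt p (x j)) * |∑ j, sg (x j) * g j|

lemma sumConsAux (n : ℕ) (f : (Fin (n+1) → Fin 3) → ℝ) :
    ∑ x : Fin (n+1) → Fin 3, f x
      = ∑ k : Fin 3, ∑ x : Fin n → Fin 3, f (Fin.cons (α := fun _ => Fin 3) k x) := by
  rw [← Equiv.sum_comp (Fin.consEquiv fun _ => Fin 3) f, Fintype.sum_prod_type]
  rfl

lemma wt_nonneg {p : ℝ} (hp : 0 < p) (hp2 : p ≤ 1/2) (k : Fin 3) : 0 ≤ wt p k := by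
  fin_cases k <;> simp [wt] <;> linarith

lemma prod_wt_nonneg {p : ℝ} (hp : 0 < p) (hp2 : p ≤ 1/2) {n : ℕ} (x : Fin n → Fin 3) :
    0 ≤ ∏ j, wt p (x j) :=
  Finset.prod_nonneg fun j _ => wt_nonneg hp hp2 _

lemma prod_wt_cons (p : ℝ) {n : ℕ} (k : Fin 3) (x : Fin n → Fin 3) :
    (∏ j, wt p (Fin.cons (α := fun _ => Fin 3) k x j)) = wt p k * ∏ j, wt p (x j) := by
  rw [Fin.prod_univ_succ]; simp

lemma sum_prod_wt {p : ℝ} (hp : 0 < p) (hp2 : p ≤ 1/2) (n : ℕ) :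
    ∑ x : Fin n → Fin 3, ∏ j, wt p (x j) = 1 := by
  induction n with
  | zero => simp
  | succ n ih =>
    rw [sumConsAux n (fun x => ∏ j, wt p (x j))]
    simp_rw [prod_wt_cons, ← Finset.mul_sum, ih, mul_one]
    simp [Fin.sum_univ_three, wt]; ring

lemma scalar_key {p c : ℝ} (hc0 : 0 ≤ c) (hc2p : c ≤ 2*p) (a s : ℝ) :
    c * |a| + (2*p - c) * |s| ≤ p * |a + s| + p * |-a + s| := by
  have h1 : 2*|a| ≤ |a + s| + |-a + s| := by
    have h := abs_add_le (a+s) (a-s)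
    rw [show a+s+(a-s) = 2*a by ring, abs_mul, abs_two] at h
    rw [show |-a + s| = |a - s| by rw [abs_sub_comm]; ring_nf]
    linarith
  have h2 : 2*|s| ≤ |a + s| + |-a + s| := by
    have h := abs_add_le (a+s) (-a+s)
    rw [show a+s+(-a+s) = 2*s by ring, abs_mul, abs_two] at h
    linarith
  nlinarith [mul_le_mul_of_nonneg_left h1 hc0,
    mul_le_mul_of_nonneg_left h2 (by linarith : (0:ℝ) ≤ 2*p - c)]

lemma Fsum_ge {p : ℝ} (hp : 0 < p) (hp2 : p ≤ 1/2) :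
    ∀ (n : ℕ) (g : Fin n → ℝ), (2*p/(2*p*n+1)) * ∑ j, |g j| ≤ Fsum p n g := by
  intro n
  induction n with
  | zero => intro g; simp [Fsum]
  | succ n ih =>
    intro g
    have hD : (0:ℝ) < 2*p*n+1 := by positivity
    have hD1 : (0:ℝ) < 2*p*(n+1)+1 := by positivity
    set c : ℝ := 2*p/(2*p*(n+1)+1) with hcdef
    have hc0 : 0 ≤ c := by positivity
    have hc2p : c ≤ 2*p := by
      rw [hcdef, div_le_iff₀ hD1]
      nlinarith [mul_nonneg (mul_nonneg hp.le hp.le) (Nat.cast_nonneg n : (0:ℝ) ≤ n),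
        mul_nonneg hp.le hp.le]
    have hc1 : c ≤ 1 := le_trans hc2p (by linarith)
    set g' : Fin n → ℝ := fun j => g j.succ with hg'
    set S : (Fin n → Fin 3) → ℝ := fun x => ∑ j, sg (x j) * g' j with hS
    set W : (Fin n → Fin 3) → ℝ := fun x => ∏ j, wt p (x j) with hW
    have hWnn : ∀ x, 0 ≤ W x := fun x => prod_wt_nonneg hp hp2 x
    have hW1 : ∑ x, W x = 1 := sum_prod_wt hp hp2 n
    have hF' : Fsum p n g' = ∑ x, W x * |S x| := rfl
    have hsplit : Fsum p (n+1) g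
        = ∑ x : Fin n → Fin 3, (p * W x) * |g 0 + S x|
          + (∑ x : Fin n → Fin 3, (p * W x) * |-(g 0) + S x|
            + ∑ x : Fin n → Fin 3, ((1-2*p) * W x) * |S x|) := by
      rw [Fsum, sumConsAux]
      have hterm : ∀ (k : Fin 3) (x : Fin n → Fin 3),
          (∏ j, wt p (Fin.cons (α := fun _ => Fin 3) k x j))
            * |∑ j, sg (Fin.cons (α := fun _ => Fin 3) k x j) * g j|
          = (wt p k * W x) * |sg k * g 0 + S x| := by
        intro k x
        rw [prod_wt_cons, Fin.sum_univ_succ]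
        simp only [Fin.cons_zero, Fin.cons_succ, hW, hS, hg']
      simp_rw [hterm]
      rw [Fin.sum_univ_three]
      have e0 : ∀ x : Fin n → Fin 3, (wt p 0 * W x) * |sg 0 * g 0 + S x|
          = (p * W x) * |g 0 + S x| := by intro x; simp [wt, sg]
      have e1 : ∀ x : Fin n → Fin 3, (wt p 1 * W x) * |sg 1 * g 0 + S x|
          = (p * W x) * |-(g 0) + S x| := by intro x; simp [wt, sg]
      have e2 : ∀ x : Fin n → Fin 3, (wt p 2 * W x) * |sg 2 * g 0 + S x|
          = ((1-2*p) * W x) * |S x| := by intro x; simp [wt, sg]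
      simp_rw [e0, e1, e2]
      rw [add_assoc]
    have hmain : ∑ x : Fin n → Fin 3, (c * |g 0| + (2*p - c) * |S x|) * W x
        ≤ ∑ x : Fin n → Fin 3, ((p * W x) * |g 0 + S x| + (p * W x) * |-(g 0) + S x|) := by
      refine Finset.sum_le_sum fun x _ => ?_
      exact le_trans (mul_le_mul_of_nonneg_right (scalar_key hc0 hc2p (g 0) (S x)) (hWnn x))
        (le_of_eq (by ring))
    have hLHS : ∑ x : Fin n → Fin 3, (c * |g 0| + (2*p - c) * |S x|) * W x
        = c * |g 0| + (2*p - c) * Fsum p n g' := by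
      have e : ∀ x : Fin n → Fin 3, (c * |g 0| + (2*p - c) * |S x|) * W x
          = c * |g 0| * W x + (2*p - c) * (W x * |S x|) := fun x => by ring
      simp_rw [e, Finset.sum_add_distrib, ← Finset.mul_sum, hW1, mul_one, ← hF']
    have hRest : ∑ x : Fin n → Fin 3, ((1-2*p) * W x) * |S x|
        = (1-2*p) * Fsum p n g' := by
      simp_rw [hF', Finset.mul_sum, mul_assoc]
    have hstep : c * |g 0| + (1 - c) * Fsum p n g' ≤ Fsum p (n+1) g := by
      rw [hsplit, hRest]
      have h2 := le_trans (le_of_eq hLHS.symm) hmain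
      rw [Finset.sum_add_distrib] at h2
      linarith
    have hih := ih g'
    have halg : (1 - c) * (2*p/(2*p*n+1)) = c := by
      rw [hcdef]; field_simp; ring
    have h1c : (0:ℝ) ≤ 1 - c := by linarith
    have hfin : c * |g 0| + c * ∑ j, |g' j| ≤ Fsum p (n+1) g := by
      have h3 := mul_le_mul_of_nonneg_left hih h1c
      rw [← mul_assoc, halg] at h3
      linarith
    rw [Fin.sum_univ_succ]
    push_cast
    calc 2*p/(2*p*(↑n+1)+1) * (|g 0| + ∑ j : Fin n, |g j.succ|)
        = c * |g 0| + c * ∑ j, |g' j| := by rw [hcdef]; ring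
      _ ≤ _ := hfin

noncomputable def wtM (p : ℝ) : Measure (Fin 3) :=
  ENNReal.ofReal p • Measure.dirac 0 + ENNReal.ofReal p • Measure.dirac 1 +
    ENNReal.ofReal (1 - 2 * p) • Measure.dirac 2

lemma entryLaw_eq_map (p : ℝ) : entryLaw p = (wtM p).map sg := by
  rw [wtM, Measure.map_add _ _ (Measurable.of_discrete (f := sg)),
    Measure.map_add _ _ (Measurable.of_discrete (f := sg)),
    Measure.map_smul, Measure.map_smul, Measure.map_smul,
    Measure.map_dirac' (Measurable.of_discrete (f := sg)),
    Measure.map_dirac' (Measurable.of_discrete (f := sg)),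
    Measure.map_dirac' (Measurable.of_discrete (f := sg))]
  rfl

lemma wtM_prob (p : ℝ) (hp : 0 < p) (hp2 : p ≤ 1/2) : IsProbabilityMeasure (wtM p) := by
  constructor
  rw [wtM]
  simp [Measure.add_apply]
  rw [← ENNReal.ofReal_add hp.le hp.le, ← ENNReal.ofReal_add (by linarith) (by linarith)]
  norm_num
  ring

lemma wtM_singleton (p : ℝ) (hp : 0 < p) (hp2 : p ≤ 1/2) (k : Fin 3) :
    wtM p {k} = ENNReal.ofReal (wt p k) := by
  fin_cases k <;>
    simp [wtM, wt, Measure.dirac_apply', Set.indicator]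

lemma entryLaw_prob (p : ℝ) (hp : 0 < p) (hp2 : p ≤ 1/2) : IsProbabilityMeasure (entryLaw p) := by
  haveI := wtM_prob p hp hp2
  rw [entryLaw_eq_map]
  exact Measure.isProbabilityMeasure_map (Measurable.of_discrete (f := sg)).aemeasurable

lemma integral_pi_entryLaw (p : ℝ) (hp : 0 < p) (hp2 : p ≤ 1/2) (d : ℕ) (g : Fin d → ℝ) :
    ∫ y, |∑ j, y j * g j| ∂(Measure.pi fun _ : Fin d => entryLaw p) = Fsum p d g := by
  haveI := wtM_prob p hp hp2
  haveI := entryLaw_prob p hp hp2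
  have hMP : MeasurePreserving (fun (x : Fin d → Fin 3) (j : Fin d) => sg (x j))
      (Measure.pi fun _ => wtM p) (Measure.pi fun _ => entryLaw p) :=
    measurePreserving_pi _ _ (fun _ =>
      ⟨Measurable.of_discrete, (entryLaw_eq_map p).symm⟩)
  have hf : Measurable fun y : Fin d → ℝ => |∑ j, y j * g j| :=
    (Finset.measurable_sum Finset.univ fun j _ =>
      (measurable_pi_apply (X := fun _ : Fin d => ℝ) j).mul_const (g j)).abs
  rw [← hMP.map_eq, integral_map hMP.measurable.aemeasurable hf.aestronglyMeasurable]
  rw [integral_fintype (Integrable.of_finite)]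
  refine Finset.sum_congr rfl fun x _ => ?_
  have h1 : (Measure.pi (fun _ : Fin d => wtM p)) {x} = ∏ j, ENNReal.ofReal (wt p (x j)) := by
    rw [← Set.univ_pi_singleton, Measure.pi_pi]
    exact Finset.prod_congr rfl fun j _ => wtM_singleton p hp hp2 (x j)
  rw [measureReal_def, h1, smul_eq_mul]
  congr 1
  · rw [ENNReal.toReal_prod]
    exact Finset.prod_congr rfl fun j _ => ENNReal.toReal_ofReal (wt_nonneg hp hp2 (x j))

lemma row_law {Ω : Type*} [MeasurableSpace Ω] (μ : Measure Ω) [IsProbabilityMeasure μ]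
    (s d : ℕ) (p : ℝ) (hp : 0 < p) (hp2 : p ≤ 1/2)
    (Φ : Ω → Matrix (Fin s) (Fin d) ℝ)
    (hmeas : ∀ i j, Measurable fun ω => Φ ω i j)
    (hindep : iIndepFun
      (fun (ij : Fin s × Fin d) ω => Φ ω ij.1 ij.2) μ)
    (hlaw : ∀ i j, Measure.map (fun ω => Φ ω i j) μ = entryLaw p) (i : Fin s) :
    Measure.map (fun ω (j : Fin d) => Φ ω i j) μ = Measure.pi (fun _ : Fin d => entryLaw p) := by
  haveI := entryLaw_prob p hp hp2
  refine (Measure.pi_eq fun t ht => ?_).symm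
  have hX : Measurable (fun ω (j : Fin d) => Φ ω i j) :=
    measurable_pi_lambda _ (fun j => hmeas i j)
  rw [Measure.map_apply hX (MeasurableSet.univ_pi ht)]
  have hpre : (fun ω (j : Fin d) => Φ ω i j) ⁻¹' (Set.pi Set.univ t)
      = ⋂ j, (fun ω => Φ ω i j) ⁻¹' t j := by
    ext ω; simp [Set.mem_univ_pi]
  rw [hpre]
  have hemb : Function.Injective (fun j : Fin d => ((i, j) : Fin s × Fin d)) :=
    fun a b h => by simpa using congrArg Prod.snd h
  have hkey := hindep.measure_inter_preimage_eq_mul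
    (Finset.univ.map ⟨_, hemb⟩) (sets := fun ij => t ij.2)
    (fun ij _ => ht ij.2)
  have e1 : (⋂ ij ∈ Finset.univ.map (⟨_, hemb⟩ : Fin d ↪ Fin s × Fin d),
      (fun ω => Φ ω ij.1 ij.2) ⁻¹' t ij.2) = ⋂ j, (fun ω => Φ ω i j) ⁻¹' t j := by
    ext ω; simp
  rw [e1, Finset.prod_map] at hkey
  rw [hkey]
  refine Finset.prod_congr rfl fun j _ => ?_
  rw [← hlaw i j, Measure.map_apply (hmeas i j) (ht j)]
  rfl

end CompressionAux

open CompressionAux in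
theorem compression_matrix_l1_bound
    {Ω : Type*} [MeasurableSpace Ω] (μ : Measure Ω) [IsProbabilityMeasure μ]
    (s d : ℕ) (hs : 0 < s) (hd : 0 < d) (p : ℝ) (hp : 0 < p) (hp2 : p ≤ 1 / 2)
    (Φ : Ω → Matrix (Fin s) (Fin d) ℝ)
    (hmeas : ∀ i j, Measurable fun ω => Φ ω i j)
    (hindep : iIndepFun
      (fun (ij : Fin s × Fin d) ω => Φ ω ij.1 ij.2) μ)
    (hlaw : ∀ i j, Measure.map (fun ω => Φ ω i j) μ = entryLaw p)
    (α r : ℝ) (hα : α = 2 * s * p) (hr : r = (d : ℝ) / s) :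
    ∀ g : Fin d → ℝ,
      ∫ ω, ∑ i, |(Φ ω *ᵥ g) i| ∂μ ≥ (α / (α * r + 1)) * ∑ a, |g a| := by
  intro g
  haveI := entryLaw_prob p hp hp2
  haveI := wtM_prob p hp hp2
  set f : (Fin d → ℝ) → ℝ := fun y => |∑ j, y j * g j| with hfdef
  have hf : Measurable f :=
    (Finset.measurable_sum Finset.univ fun j _ =>
      (measurable_pi_apply (X := fun _ : Fin d => ℝ) j).mul_const (g j)).abs
  have hMP : MeasurePreserving (fun (x : Fin d → Fin 3) (j : Fin d) => sg (x j))
      (Measure.pi fun _ => wtM p) (Measure.pi fun _ => entryLaw p) :=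
    measurePreserving_pi _ _ (fun _ =>
      ⟨Measurable.of_discrete, (entryLaw_eq_map p).symm⟩)
  have hint_pi : Integrable f (Measure.pi fun _ : Fin d => entryLaw p) := by
    rw [← hMP.map_eq]
    refine (integrable_map_measure ?_ hMP.measurable.aemeasurable).mpr Integrable.of_finite
    exact hf.aestronglyMeasurable
  have hrow := row_law μ s d p hp hp2 Φ hmeas hindep hlaw
  have hXmeas : ∀ i : Fin s, Measurable (fun ω (j : Fin d) => Φ ω i j) :=
    fun i => measurable_pi_lambda _ (fun j => hmeas i j)
  have hint : ∀ i : Fin s, Integrable (fun ω => f (fun j => Φ ω i j)) μ := by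
    intro i
    have h1 : Integrable f (Measure.map (fun ω (j : Fin d) => Φ ω i j) μ) := by
      rw [hrow i]; exact hint_pi
    exact (integrable_map_measure hf.aestronglyMeasurable (hXmeas i).aemeasurable).mp h1
  have hval : ∀ i : Fin s, ∫ ω, f (fun j => Φ ω i j) ∂μ = Fsum p d g := by
    intro i
    rw [← integral_map (hXmeas i).aemeasurable hf.aestronglyMeasurable, hrow i,
      integral_pi_entryLaw p hp hp2 d g]
  have hcongr : ∀ ω, ∑ i, |(Φ ω *ᵥ g) i| = ∑ i, f (fun j => Φ ω i j) := by
    intro ω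
    refine Finset.sum_congr rfl fun i _ => ?_
    simp [hfdef, Matrix.mulVec, dotProduct]
  have hI : ∫ ω, ∑ i, |(Φ ω *ᵥ g) i| ∂μ = (s : ℝ) * Fsum p d g := by
    calc ∫ ω, ∑ i, |(Φ ω *ᵥ g) i| ∂μ = ∫ ω, ∑ i, f (fun j => Φ ω i j) ∂μ := by
          simp_rw [hcongr]
      _ = ∑ i : Fin s, ∫ ω, f (fun j => Φ ω i j) ∂μ :=
          integral_finset_sum _ (fun i _ => hint i)
      _ = ∑ _i : Fin s, Fsum p d g := Finset.sum_congr rfl fun i _ => hval i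
      _ = (s : ℝ) * Fsum p d g := by
          rw [Finset.sum_const, Finset.card_univ, Fintype.card_fin, nsmul_eq_mul]
  rw [ge_iff_le, hI]
  have hs0 : (0:ℝ) < s := by exact_mod_cast hs
  have hden : (0:ℝ) < 2*p*d+1 := by positivity
  have hcoef : α / (α * r + 1) = (s:ℝ) * (2*p/(2*p*d+1)) := by
    rw [hα, hr]
    rw [show 2*(s:ℝ)*p * ((d:ℝ)/(s:ℝ)) = 2*p*d by field_simp]
    field_simp
  rw [hcoef, mul_assoc]
  exact mul_le_mul_of_nonneg_left (Fsum_ge hp hp2 d g) hs0.le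
end

section
/- For every d ≥ 1 and every vector g ∈ ℝ^d, the sum over all 2^d sign vectors A ∈ {−1, +1}^d of the absolute inner products satisfies ∑_{A ∈ {−1,+1}^d} |⟨A, g⟩| ≥ (2^d / d)·‖g‖₁, where ‖g‖₁ = ∑_{i=1}^d |g_i|. -/
open Finset

lemma key_bound (d : ℕ) (g : Fin d → ℝ) (i : Fin d) :
    (2:ℝ)^d * |g i| ≤ ∑ A ∈ Fintype.piFinset (fun _ : Fin d => ({-1, 1} : Finset ℝ)),
        |∑ j, A j * g j| := by
  set S := Fintype.piFinset (fun _ : Fin d => ({-1, 1} : Finset ℝ)) with hS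
  have hmem : ∀ A ∈ S, ∀ j, A j = -1 ∨ A j = 1 := by
    intro A hA j
    have := Fintype.mem_piFinset.mp hA j
    simpa using this
  set σ : (Fin d → ℝ) → (Fin d → ℝ) := fun A => Function.update A i (-(A i)) with hσ
  have hσσ : Function.Involutive σ := by
    intro A; funext j
    by_cases h : j = i
    · subst h; simp [σ]
    · simp [σ, Function.update_of_ne h]
  have hσmem : ∀ A, A ∈ S → σ A ∈ S := by
    intro A hA
    rw [Fintype.mem_piFinset]
    intro j
    by_cases h : j = i
    · subst h
      rcases hmem A hA j with h1 | h1 <;> simp [σ, h1]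
    · simp only [σ, Function.update_of_ne h]
      simpa using Fintype.mem_piFinset.mp hA j
  have hsum_eq : ∑ A ∈ S, |∑ j, σ A j * g j| = ∑ A ∈ S, |∑ j, A j * g j| := by
    apply Finset.sum_equiv (Function.Involutive.toPerm σ hσσ)
    · intro A
      constructor
      · exact hσmem A
      · intro h
        have := hσmem _ h
        simp only [Function.Involutive.coe_toPerm] at this ⊢
        rwa [hσσ A] at this
    · intro A _; rfl
  have hdiff : ∀ A ∈ S, |∑ j, A j * g j| + |∑ j, σ A j * g j| ≥ 2 * |g i| := by
    intro A hA
    have h1 : ∑ j, A j * g j - ∑ j, σ A j * g j = 2 * A i * g i := by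
      rw [← Finset.sum_sub_distrib, Finset.sum_eq_single i]
      · simp [σ]; ring
      · intro j _ hj; simp [σ, Function.update_of_ne hj]
      · simp
    have hAi : |A i| = 1 := by
      rcases hmem A hA i with h1 | h1 <;> simp [h1]
    calc |∑ j, A j * g j| + |∑ j, σ A j * g j|
        ≥ |(∑ j, A j * g j) - ∑ j, σ A j * g j| := abs_sub _ _
      _ = 2 * |g i| := by rw [h1, abs_mul, abs_mul, hAi]; simp [abs_of_nonneg]
  have hcard : (S.card : ℝ) = 2 ^ d := by
    rw [hS, Fintype.card_piFinset]
    have : ({-1, 1} : Finset ℝ).card = 2 := by rw [Finset.card_insert_of_notMem (by norm_num), Finset.card_singleton]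
    simp [this]
  have h2 : 2 * ∑ A ∈ S, |∑ j, A j * g j| ≥ (S.card : ℝ) * (2 * |g i|) := by
    calc 2 * ∑ A ∈ S, |∑ j, A j * g j|
        = ∑ A ∈ S, (|∑ j, A j * g j| + |∑ j, σ A j * g j|) := by
          rw [Finset.sum_add_distrib, hsum_eq]; ring
      _ ≥ ∑ A ∈ S, 2 * |g i| := Finset.sum_le_sum hdiff
      _ = (S.card : ℝ) * (2 * |g i|) := by rw [Finset.sum_const, nsmul_eq_mul]
  rw [hcard] at h2
  linarith

theorem sign_vector_l1_bound (d : ℕ) (hd : 1 ≤ d) (g : Fin d → ℝ) :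
    ∑ A ∈ Fintype.piFinset (fun _ : Fin d => ({-1, 1} : Finset ℝ)),
        |∑ i, A i * g i| ≥ ((2 : ℝ) ^ d / d) * ∑ i, |g i| := by
  have hdpos : (0:ℝ) < d := by exact_mod_cast hd
  rw [ge_iff_le, div_mul_eq_mul_div, div_le_iff₀ hdpos]
  calc (2:ℝ)^d * ∑ i, |g i| = ∑ i : Fin d, (2:ℝ)^d * |g i| := by
        rw [Finset.mul_sum]
    _ ≤ ∑ _i : Fin d, ∑ A ∈ Fintype.piFinset (fun _ : Fin d => ({-1, 1} : Finset ℝ)),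
          |∑ j, A j * g j| := Finset.sum_le_sum (fun i _ => key_bound d g i)
    _ = (∑ A ∈ Fintype.piFinset (fun _ : Fin d => ({-1, 1} : Finset ℝ)),
          |∑ j, A j * g j|) * d := by
        rw [Finset.sum_const, nsmul_eq_mul, Finset.card_univ, Fintype.card_fin, mul_comm]
end

section
/- Let d ≥ 1, 1 ≤ k ≤ d, and g ∈ ℝ^d. Let Ω_k denote the set of all vectors φ ∈ {−1, 0, +1}^d having exactly k nonzero entries. Then ∑_{φ ∈ Ω_k} |⟨φ, g⟩| ≥ (2^k / k)·C(d−1, k−1)·‖g‖₁, where C(·,·) is the binomial coefficient and ‖g‖₁ = ∑_i |g_i|. -/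
open Finset

lemma tern_card_bound (d k : ℕ) (hk : 1 ≤ k) (i : Fin d) :
    (2:ℕ) ^ k * (d - 1).choose (k - 1) ≤
      ((Fintype.piFinset (fun _ : Fin d => ({-1, 0, 1} : Finset ℝ))).filter
        (fun φ => (Finset.univ.filter fun j => φ j ≠ 0).card = k ∧ φ i ≠ 0)).card := by
  classical
  set D := ((Finset.univ.erase i).powersetCard (k-1)).sigma
      (fun S => Fintype.piFinset (fun j => if j ∈ insert i S then ({-1,1} : Finset ℝ) else {0}))
    with hD
  have hiS : ∀ S ∈ (Finset.univ.erase i).powersetCard (k-1), i ∉ S := by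
    intro S hS h
    exact (Finset.mem_erase.mp ((Finset.mem_powersetCard.mp hS).1 h)).1 rfl
  have hcard : D.card = (d-1).choose (k-1) * 2 ^ k := by
    rw [hD, Finset.card_sigma]
    have h1 : ∀ S ∈ (Finset.univ.erase i).powersetCard (k-1),
        (Fintype.piFinset (fun j => if j ∈ insert i S then ({-1,1} : Finset ℝ) else ({0}:Finset ℝ))).card = 2 ^ k := by
      intro S hS
      have hS2 := (Finset.mem_powersetCard.mp hS).2
      rw [Fintype.card_piFinset]
      have h2 : ∀ j : Fin d, (if j ∈ insert i S then ({-1,1} : Finset ℝ) else ({0}:Finset ℝ)).card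
          = if j ∈ insert i S then 2 else 1 := by
        intro j; split <;> norm_num
      rw [Finset.prod_congr rfl (fun j _ => h2 j), Finset.prod_ite_mem, Finset.univ_inter,
        Finset.prod_const, Finset.card_insert_of_notMem (hiS S hS), hS2]
      congr 1; omega
    rw [Finset.sum_congr rfl h1, Finset.sum_const, smul_eq_mul,
      Finset.card_powersetCard, Finset.card_erase_of_mem (Finset.mem_univ i), Finset.card_univ,
      Fintype.card_fin]
  have key : ∀ p ∈ D, (∀ j, p.2 j ≠ 0 ↔ j ∈ insert i p.1) ∧ (∀ j, p.2 j ∈ ({-1,0,1}:Finset ℝ)) := by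
    rintro ⟨S, ε⟩ hp
    rw [hD, Finset.mem_sigma] at hp
    have hε := Fintype.mem_piFinset.mp hp.2
    constructor
    · intro j
      have := hε j
      by_cases hj : j ∈ insert i S
      · rw [if_pos hj] at this
        simp only [Finset.mem_insert, Finset.mem_singleton] at this
        constructor
        · intro _; exact hj
        · intro _
          rcases this with h | h <;> · show ε j ≠ 0; rw [h]; norm_num
      · rw [if_neg hj] at this
        simp only [Finset.mem_singleton] at this
        simp [this, hj]
    · intro j
      have := hε j
      by_cases hj : j ∈ insert i S
      · rw [if_pos hj] at this
        simp only [Finset.mem_insert, Finset.mem_singleton] at this ⊢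
        tauto
      · rw [if_neg hj] at this
        simp only [Finset.mem_singleton] at this
        simp [this]
  calc (2:ℕ) ^ k * (d-1).choose (k-1) = D.card := by rw [hcard]; ring
  _ ≤ _ := by
    apply Finset.card_le_card_of_injOn (fun p => p.2)
    · rintro ⟨S, ε⟩ hp
      obtain ⟨hsupp, hmem⟩ := key ⟨S, ε⟩ hp
      rw [hD, Finset.mem_coe, Finset.mem_sigma] at hp
      have hiS' := hiS S hp.1
      have hS2 := (Finset.mem_powersetCard.mp hp.1).2
      simp only [Finset.mem_coe, Finset.mem_filter]
      refine ⟨Fintype.mem_piFinset.mpr hmem, ?_, ?_⟩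
      · have : Finset.univ.filter (fun j => ε j ≠ 0) = insert i S := by
          ext j; simp [hsupp j]
        rw [this, Finset.card_insert_of_notMem hiS', hS2]; omega
      · rw [hsupp i]; exact Finset.mem_insert_self i S
    · rintro ⟨S, ε⟩ hp ⟨S', ε'⟩ hp' (h : ε = ε')
      obtain ⟨hsupp, -⟩ := key ⟨S, ε⟩ hp
      obtain ⟨hsupp', -⟩ := key ⟨S', ε'⟩ hp'
      simp only [Finset.mem_coe] at hp hp'; rw [hD, Finset.mem_sigma] at hp hp'
      have hins : insert i S = insert i S' := by
        ext j
        rw [← hsupp j, h, hsupp' j]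
      have hSS : S = S' := by
        rw [← Finset.erase_insert (hiS S hp.1), hins, Finset.erase_insert (hiS S' hp'.1)]
      subst hSS; subst h; rfl


lemma tern_pair_bound (d k : ℕ) (g : Fin d → ℝ) (i : Fin d) :
    (((Fintype.piFinset (fun _ : Fin d => ({-1, 0, 1} : Finset ℝ))).filter
        (fun φ => (Finset.univ.filter fun j => φ j ≠ 0).card = k ∧ φ i ≠ 0)).card : ℝ) * |g i| ≤
      ∑ φ ∈ (Fintype.piFinset (fun _ : Fin d => ({-1, 0, 1} : Finset ℝ))).filter
        (fun φ => (Finset.univ.filter fun j => φ j ≠ 0).card = k ∧ φ i ≠ 0),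
        |∑ j, φ j * g j| := by
  classical
  set Ωi := (Fintype.piFinset (fun _ : Fin d => ({-1, 0, 1} : Finset ℝ))).filter
      (fun φ => (Finset.univ.filter fun j => φ j ≠ 0).card = k ∧ φ i ≠ 0) with hΩi
  set σ : (Fin d → ℝ) → (Fin d → ℝ) := fun φ => Function.update φ i (-(φ i)) with hσ
  have hmaps : ∀ φ ∈ Ωi, σ φ ∈ Ωi := by
    intro φ hφ
    rw [hΩi, Finset.mem_filter] at hφ ⊢
    obtain ⟨hpi, hcard, hne⟩ := hφ
    have hpi' := Fintype.mem_piFinset.mp hpi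
    refine ⟨Fintype.mem_piFinset.mpr fun j => ?_, ?_, ?_⟩
    · by_cases hj : j = i
      · subst hj
        have := hpi' j
        simp only [Function.update_self, σ, Finset.mem_insert, Finset.mem_singleton] at this ⊢
        rcases this with h | h | h <;> rw [h] <;> norm_num
      · rw [hσ]; simp only [Function.update_of_ne hj]; exact hpi' j
    · have : (Finset.univ.filter fun j => σ φ j ≠ 0) = (Finset.univ.filter fun j => φ j ≠ 0) := by
        apply Finset.filter_congr
        intro j _
        by_cases hj : j = i
        · subst hj; simp [hσ, Function.update_self, neg_ne_zero]
        · simp [hσ, Function.update_of_ne hj]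
      rw [this]; exact hcard
    · rw [hσ]; simp only [Function.update_self, neg_ne_zero]; exact hne
  have hinv : ∀ φ : Fin d → ℝ, σ (σ φ) = φ := by
    intro φ
    rw [hσ]
    simp [Function.update_self, Function.update_idem]
  have hsum : ∑ φ ∈ Ωi, |∑ j, σ φ j * g j| = ∑ φ ∈ Ωi, |∑ j, φ j * g j| := by
    apply Finset.sum_nbij' σ σ hmaps hmaps (fun φ _ => hinv φ) (fun φ _ => hinv φ)
    intro φ _
    rfl
  have hpt : ∀ φ ∈ Ωi, 2 * |g i| ≤ |∑ j, φ j * g j| + |∑ j, σ φ j * g j| := by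
    intro φ hφ
    rw [hΩi, Finset.mem_filter] at hφ
    obtain ⟨hpi, -, hne⟩ := hφ
    have hpi' := Fintype.mem_piFinset.mp hpi
    have hdiff : (∑ j, φ j * g j) - (∑ j, σ φ j * g j) = 2 * (φ i * g i) := by
      rw [← Finset.sum_sub_distrib]
      rw [Finset.sum_eq_single i]
      · rw [hσ]; simp only [Function.update_self]; ring
      · intro j _ hj; rw [hσ]; simp only [Function.update_of_ne hj]; ring
      · intro h; exact absurd (Finset.mem_univ i) h
    have habs : |φ i| = 1 := by
      have := hpi' i
      simp only [Finset.mem_insert, Finset.mem_singleton] at this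
      rcases this with h | h | h
      · rw [h]; norm_num
      · exact absurd h hne
      · rw [h]; norm_num
    calc 2 * |g i| = |2 * (φ i * g i)| := by
          rw [abs_mul, abs_mul, habs, one_mul]
          norm_num
      _ = |(∑ j, φ j * g j) - (∑ j, σ φ j * g j)| := by rw [hdiff]
      _ ≤ _ := abs_sub _ _
  have h2 : 2 * ∑ φ ∈ Ωi, |∑ j, φ j * g j| ≥ (Ωi.card : ℝ) * (2 * |g i|) := by
    have := Finset.sum_le_sum hpt
    rw [Finset.sum_const] at this
    rw [Finset.sum_add_distrib, hsum] at this
    rw [nsmul_eq_mul] at this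
    linarith
  linarith


/-!
Ternary-vector inequality: for `1 ≤ k ≤ d` and `g ∈ ℝ^d`, summing over the set `Ω_k` of vectors
`φ ∈ {-1,0,+1}^d` with exactly `k` nonzero entries,
`∑_{φ ∈ Ω_k} |⟨φ, g⟩| ≥ (2^k/k)·C(d-1, k-1)·‖g‖₁`.
-/

theorem ternary_vector_l1_bound (d k : ℕ) (hd : 1 ≤ d) (hk : 1 ≤ k) (hkd : k ≤ d)
    (g : Fin d → ℝ) :
    ∑ φ ∈ (Fintype.piFinset (fun _ : Fin d => ({-1, 0, 1} : Finset ℝ))).filter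
        (fun φ => (Finset.univ.filter fun i => φ i ≠ 0).card = k),
      |∑ i, φ i * g i| ≥
      ((2 : ℝ) ^ k / k) * (Nat.choose (d - 1) (k - 1)) * ∑ i, |g i| := by
  classical
  set Ω := (Fintype.piFinset (fun _ : Fin d => ({-1, 0, 1} : Finset ℝ))).filter
      (fun φ => (Finset.univ.filter fun i => φ i ≠ 0).card = k) with hΩ
  set F : (Fin d → ℝ) → ℝ := fun φ => |∑ j, φ j * g j| with hF
  -- double counting
  have hdouble : ∑ i, ∑ φ ∈ Ω.filter (fun φ => φ i ≠ 0), F φ = (k : ℝ) * ∑ φ ∈ Ω, F φ := by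
    have : ∀ i : Fin d, ∑ φ ∈ Ω.filter (fun φ => φ i ≠ 0), F φ
        = ∑ φ ∈ Ω, if φ i ≠ 0 then F φ else 0 := fun i => Finset.sum_filter _ _
    rw [Finset.sum_congr rfl (fun i _ => this i), Finset.sum_comm]
    rw [Finset.mul_sum]
    apply Finset.sum_congr rfl
    intro φ hφ
    rw [hΩ, Finset.mem_filter] at hφ
    have : ∑ i, (if φ i ≠ 0 then F φ else 0) = ((Finset.univ.filter fun i => φ i ≠ 0).card : ℝ) * F φ := by
      rw [← Finset.sum_filter, Finset.sum_const, nsmul_eq_mul]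
    rw [this, hφ.2]
  -- per-coordinate bound
  have hper : ∀ i : Fin d, (2:ℝ)^k * ((d-1).choose (k-1)) * |g i|
      ≤ ∑ φ ∈ Ω.filter (fun φ => φ i ≠ 0), F φ := by
    intro i
    have hff : Ω.filter (fun φ => φ i ≠ 0)
        = (Fintype.piFinset (fun _ : Fin d => ({-1, 0, 1} : Finset ℝ))).filter
          (fun φ => (Finset.univ.filter fun j => φ j ≠ 0).card = k ∧ φ i ≠ 0) := by
      rw [hΩ, Finset.filter_filter]
    rw [hff]
    calc (2:ℝ)^k * ((d-1).choose (k-1)) * |g i|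
        ≤ (((Fintype.piFinset (fun _ : Fin d => ({-1, 0, 1} : Finset ℝ))).filter
          (fun φ => (Finset.univ.filter fun j => φ j ≠ 0).card = k ∧ φ i ≠ 0)).card : ℝ) * |g i| := by
          apply mul_le_mul_of_nonneg_right _ (abs_nonneg _)
          have := tern_card_bound d k hk i
          calc (2:ℝ)^k * ((d-1).choose (k-1)) = ((2^k * (d-1).choose (k-1) : ℕ) : ℝ) := by
                push_cast; ring
            _ ≤ _ := by exact_mod_cast Nat.cast_le.mpr this
      _ ≤ _ := tern_pair_bound d k g i
  have htotal : (2:ℝ)^k * ((d-1).choose (k-1)) * (∑ i, |g i|) ≤ (k : ℝ) * ∑ φ ∈ Ω, F φ := by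
    rw [← hdouble, Finset.mul_sum]
    exact Finset.sum_le_sum fun i _ => hper i
  have hkpos : (0:ℝ) < k := by exact_mod_cast hk
  rw [ge_iff_le, div_mul_eq_mul_div, div_mul_eq_mul_div, div_le_iff₀ hkpos]
  calc (2:ℝ)^k * ((d-1).choose (k-1)) * (∑ i, |g i|) ≤ (k:ℝ) * ∑ φ ∈ Ω, F φ := htotal
    _ = (∑ φ ∈ Ω, F φ) * k := by ring
end

section
/- Let Φ be a random s × d matrix whose entries are independent and identically distributed with ℙ(Φ_{ij} = 1) = ℙ(Φ_{ij} = −1) = p and ℙ(Φ_{ij} = 0) = 1 − 2p, where 0 < p ≤ 1/2. Set α = 2sp and r = d/s, and let 𝒢_S denote the coordinatewise sign function (𝒢_S(y) = +1 if y ≥ 0 and −1 if y < 0). Then for every x ∈ ℝ^d, E‖β(x)·Φᵀ𝒢_S(Φx) − x‖₂² ≤ (1 − δ(x))·‖x‖₂², where β(x) = ‖x‖₁ / (d(1+α)(1+αr)) and δ(x) = (α / ((1+α)(1+rα)²))·ρ(x) with ρ(x) = ‖x‖₁² / (d‖x‖₂²). In other words, the sign-quantized random linear map F(x) = β(x)·Φᵀ𝒢_S(Φx)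 is a compression operator with input-dependent compression coefficient δ(x). -/
/-!
Sign-quantized Random Linear Compressor (SRLC): if `Φ` is a random `s × d` matrix with i.i.d.
entries `+1` w.p. `p`, `-1` w.p. `p`, `0` w.p. `1 - 2p`, `α = 2sp`, `r = d/s`, and `𝒢_S` is the
coordinatewise sign, then `F(x) = β(x)·Φᵀ𝒢_S(Φx)` with `β(x) = ‖x‖₁/(d(1+α)(1+αr))` satisfies
`E‖F(x) − x‖₂² ≤ (1 − δ(x))·‖x‖₂²` with
`δ(x) = (α/((1+α)(1+rα)²))·ρ(x)`, `ρ(x) = ‖x‖₁²/(d‖x‖₂²)`.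
-/

open MeasureTheory ProbabilityTheory Matrix

/-- Coordinatewise sign function: `+1` for `y ≥ 0`, `-1` for `y < 0`. -/
noncomputable def signQ (y : ℝ) : ℝ := if 0 ≤ y then 1 else -1

namespace SRLC

variable {X : Type*}

/-- Generic finite "expectation". -/
noncomputable def Exp (P : Finset X) (W : X → ℝ) (f : X → ℝ) : ℝ :=
  ∑ σ ∈ P, W σ * f σ

lemma Exp_mono {P : Finset X} {W : X → ℝ} (hW : ∀ σ ∈ P, 0 ≤ W σ)
    {f g : X → ℝ} (h : ∀ σ ∈ P, f σ ≤ g σ) : Exp P W f ≤ Exp P W g :=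
  Finset.sum_le_sum fun σ hσ => mul_le_mul_of_nonneg_left (h σ hσ) (hW σ hσ)

lemma Exp_congr {P : Finset X} {W : X → ℝ}
    {f g : X → ℝ} (h : ∀ σ ∈ P, f σ = g σ) : Exp P W f = Exp P W g :=
  Finset.sum_congr rfl fun σ hσ => by rw [h σ hσ]

lemma Exp_add {P : Finset X} {W : X → ℝ} (f g : X → ℝ) :
    Exp P W (fun σ => f σ + g σ) = Exp P W f + Exp P W g := by
  simp [Exp, mul_add, Finset.sum_add_distrib]

lemma Exp_sub {P : Finset X} {W : X → ℝ} (f g : X → ℝ) :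
    Exp P W (fun σ => f σ - g σ) = Exp P W f - Exp P W g := by
  simp [Exp, mul_sub, Finset.sum_sub_distrib]

lemma Exp_const_mul {P : Finset X} {W : X → ℝ} (c : ℝ) (f : X → ℝ) :
    Exp P W (fun σ => c * f σ) = c * Exp P W f := by
  simp [Exp, Finset.mul_sum]; apply Finset.sum_congr rfl; intros; ring

lemma Exp_neg {P : Finset X} {W : X → ℝ} (f : X → ℝ) :
    Exp P W (fun σ => - f σ) = - Exp P W f := by
  simp [Exp, Finset.sum_neg_distrib]

lemma Exp_sum {P : Finset X} {W : X → ℝ} {A : Type*} (s : Finset A) (f : A → X → ℝ) :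
    Exp P W (fun σ => ∑ a ∈ s, f a σ) = ∑ a ∈ s, Exp P W (f a) := by
  simp only [Exp, Finset.mul_sum]
  exact Finset.sum_comm

lemma Exp_const {P : Finset X} {W : X → ℝ} (hW : ∑ σ ∈ P, W σ = 1) (c : ℝ) :
    Exp P W (fun _ => c) = c := by
  simp only [Exp]
  rw [← Finset.sum_mul, hW, one_mul]

lemma abs_Exp_le {P : Finset X} {W : X → ℝ} (hW : ∀ σ ∈ P, 0 ≤ W σ)
    {f : X → ℝ} {c : ℝ} (h : ∀ σ ∈ P, |f σ| ≤ c) (hP : ∑ σ ∈ P, W σ = 1) :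
    |Exp P W f| ≤ c := by
  have h1 : Exp P W f ≤ c := by
    calc Exp P W f ≤ Exp P W (fun _ => c) :=
          Exp_mono hW fun σ hσ => le_trans (le_abs_self _) (h σ hσ)
    _ = c := Exp_const hP c
  have h2 : -c ≤ Exp P W f := by
    calc (-c : ℝ) = Exp P W (fun _ => -c) := (Exp_const hP (-c)).symm
    _ ≤ Exp P W f := Exp_mono hW fun σ hσ => by
          have := h σ hσ; have := neg_abs_le (f σ); linarith
  exact abs_le.2 ⟨h2, h1⟩

section Pi

variable {ι κ : Type*} [Fintype ι] [DecidableEq ι] [DecidableEq κ]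
  (t : Finset κ) (w : κ → ℝ)

/-- Weight of a configuration. -/
noncomputable def piW (σ : ι → κ) : ℝ := ∏ i, w (σ i)

lemma pi_weight_factor (g : ι → κ → ℝ) :
    Exp (Fintype.piFinset fun _ : ι => t) (piW w) (fun σ => ∏ i, g i (σ i))
      = ∏ i, ∑ v ∈ t, w v * g i v := by
  rw [Finset.prod_univ_sum]
  apply Finset.sum_congr rfl
  intro σ _
  rw [piW, ← Finset.prod_mul_distrib]

lemma piW_total (hw : ∑ v ∈ t, w v = 1) :
    ∑ σ ∈ Fintype.piFinset (fun _ : ι => t), piW w σ = 1 := by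
  have := pi_weight_factor (ι := ι) t w (fun _ _ => 1)
  simp only [Exp, Finset.prod_const_one, mul_one, hw] at this
  simpa using this

lemma piW_nonneg (hw : ∀ v ∈ t, 0 ≤ w v) (σ : ι → κ)
    (hσ : σ ∈ Fintype.piFinset (fun _ : ι => t)) : 0 ≤ piW w σ :=
  Finset.prod_nonneg fun i _ => hw _ (Fintype.mem_piFinset.1 hσ i)

lemma Exp_pi_subset (hw : ∑ v ∈ t, w v = 1) (A : Finset ι) (h : ι → κ → ℝ) :
    Exp (Fintype.piFinset fun _ : ι => t) (piW w) (fun σ => ∏ i ∈ A, h i (σ i))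
      = ∏ i ∈ A, ∑ v ∈ t, w v * h i v := by
  have key := pi_weight_factor (ι := ι) t w (fun i v => if i ∈ A then h i v else 1)
  have l1 : ∀ σ : ι → κ, (∏ i, if i ∈ A then h i (σ i) else 1) = ∏ i ∈ A, h i (σ i) := by
    intro σ
    rw [Finset.prod_ite_mem Finset.univ A fun i => h i (σ i), Finset.univ_inter]
  have l2 : ∀ i : ι, (∑ v ∈ t, w v * if i ∈ A then h i v else 1)
      = if i ∈ A then ∑ v ∈ t, w v * h i v else 1 := by
    intro i
    split_ifs with hi <;> simp [hw]
  simp only [l1, l2] at key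
  rw [key, Finset.prod_ite_mem Finset.univ A, Finset.univ_inter]

lemma Exp_pi_single (hw : ∑ v ∈ t, w v = 1) (j : ι) (h : κ → ℝ) :
    Exp (Fintype.piFinset fun _ : ι => t) (piW w) (fun σ => h (σ j))
      = ∑ v ∈ t, w v * h v := by
  have := Exp_pi_subset t w hw {j} (fun _ => h)
  simpa using this

lemma Exp_pi_pair (hw : ∑ v ∈ t, w v = 1) {j k : ι} (hjk : j ≠ k) (f g : κ → ℝ) :
    Exp (Fintype.piFinset fun _ : ι => t) (piW w) (fun σ => f (σ j) * g (σ k))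
      = (∑ v ∈ t, w v * f v) * (∑ v ∈ t, w v * g v) := by
  have key := Exp_pi_subset t w hw {j, k} (fun i v => if i = j then f v else g v)
  have e : ∀ σ : ι → κ, (∏ i ∈ ({j, k} : Finset ι), if i = j then f (σ i) else g (σ i))
      = f (σ j) * g (σ k) := by
    intro σ; rw [Finset.prod_pair hjk]; simp [Ne.symm hjk]
  calc Exp (Fintype.piFinset fun _ : ι => t) (piW w) (fun σ => f (σ j) * g (σ k))
      = Exp (Fintype.piFinset fun _ : ι => t) (piW w)
        (fun σ => ∏ i ∈ ({j, k} : Finset ι), if i = j then f (σ i) else g (σ i)) :=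
        Exp_congr (fun σ _ => (e σ).symm)
    _ = ∏ i ∈ ({j, k} : Finset ι), ∑ v ∈ t, w v * if i = j then f v else g v := key
    _ = (∑ v ∈ t, w v * f v) * (∑ v ∈ t, w v * g v) := by
        rw [Finset.prod_pair hjk]; simp [Ne.symm hjk]

end Pi


section Flip

variable {ι : Type*} [Fintype ι] [DecidableEq ι]

lemma Exp_pi_flip (t : Finset ℝ) (w : ℝ → ℝ)
    (ht : ∀ v ∈ t, -v ∈ t) (hwe : ∀ v, w (-v) = w v) (j : ι) (f : (ι → ℝ) → ℝ) :
    Exp (Fintype.piFinset fun _ : ι => t) (piW w) f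
      = Exp (Fintype.piFinset fun _ : ι => t) (piW w)
          (fun σ => f (Function.update σ j (-σ j))) := by
  unfold Exp
  refine Finset.sum_nbij' (fun σ => Function.update σ j (-σ j))
    (fun σ => Function.update σ j (-σ j)) ?_ ?_ ?_ ?_ ?_
  · intro σ hσ
    rw [Fintype.mem_piFinset] at hσ ⊢
    intro i
    rcases eq_or_ne i j with rfl | hij
    · rw [Function.update_self]; exact ht _ (hσ i)
    · rw [Function.update_of_ne hij]; exact hσ i
  · intro σ hσ
    rw [Fintype.mem_piFinset] at hσ ⊢
    intro i
    rcases eq_or_ne i j with rfl | hij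
    · rw [Function.update_self]; exact ht _ (hσ i)
    · rw [Function.update_of_ne hij]; exact hσ i
  · intro σ _
    ext i
    rcases eq_or_ne i j with rfl | hij
    · rw [Function.update_self, Function.update_self, neg_neg]
    · simp [Function.update_of_ne hij]
  · intro σ _
    ext i
    rcases eq_or_ne i j with rfl | hij
    · rw [Function.update_self, Function.update_self, neg_neg]
    · simp [Function.update_of_ne hij]
  · intro σ _
    have hW : piW w (Function.update σ j (-σ j)) = piW w σ := by
      unfold piW
      apply Finset.prod_congr rfl
      intro i _
      rcases eq_or_ne i j with rfl | hij
      · rw [Function.update_self, hwe]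
      · rw [Function.update_of_ne hij]
    rw [hW]
    have harg : (Function.update (Function.update σ j (-σ j)) j
        (-(Function.update σ j (-σ j)) j)) = σ := by
      ext i
      rcases eq_or_ne i j with rfl | hij
      · rw [Function.update_self, Function.update_self, neg_neg]
      · simp [Function.update_of_ne hij]
    dsimp only
    rw [harg]

end Flip


lemma Exp_abs {P : Finset X} {W : X → ℝ} (hW : ∀ σ ∈ P, 0 ≤ W σ) (f : X → ℝ) :
    |Exp P W f| ≤ Exp P W (fun σ => |f σ|) := by
  refine le_trans (Finset.abs_sum_le_sum_abs _ _) (le_of_eq ?_)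
  apply Finset.sum_congr rfl
  intro σ hσ
  rw [abs_mul, abs_of_nonneg (hW σ hσ)]

lemma signQ_sq (y : ℝ) : signQ y ^ 2 = 1 := by
  unfold signQ; split_ifs <;> norm_num

lemma signQ_mul (y : ℝ) : signQ y * y = |y| := by
  unfold signQ; split_ifs with h
  · rw [one_mul, abs_of_nonneg h]
  · rw [abs_of_neg (not_le.1 h)]; ring

section Row

/-- Value set of an entry. -/
noncomputable def S : Finset ℝ := {-1, 0, 1}

/-- Weight function of an entry. -/
noncomputable def wf (p : ℝ) : ℝ → ℝ := fun v => if v = 0 then 1 - 2 * p else p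

lemma wf_even (p v : ℝ) : wf p (-v) = wf p v := by simp [wf, neg_eq_zero]

lemma wf_nonneg {p : ℝ} (hp : 0 < p) (hp2 : p ≤ 1 / 2) (v : ℝ) : 0 ≤ wf p v := by
  unfold wf; split_ifs <;> linarith

lemma mem_S_cases {v : ℝ} (hv : v ∈ S) : v = -1 ∨ v = 0 ∨ v = 1 := by
  simpa [S] using hv

lemma S_neg : ∀ v ∈ S, -v ∈ S := by
  intro v hv
  rcases mem_S_cases hv with h | h | h <;> rw [h] <;> norm_num [S]

lemma sumS (p : ℝ) (h : ℝ → ℝ) :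
    ∑ v ∈ S, wf p v * h v = p * h 1 + p * h (-1) + (1 - 2 * p) * h 0 := by
  rw [show (S : Finset ℝ) = {-1, 0, 1} from rfl]
  rw [show ({-1, 0, 1} : Finset ℝ) = insert (-1 : ℝ) (insert (0 : ℝ) {1}) from rfl]
  rw [Finset.sum_insert (by norm_num), Finset.sum_insert (by norm_num),
    Finset.sum_singleton]
  norm_num [wf]
  ring

lemma sumS_one (p : ℝ) : ∑ v ∈ S, wf p v = 1 := by
  have := sumS p (fun _ => 1)
  simp only [mul_one] at this
  rw [this]; ring

variable {d : ℕ} {p : ℝ}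

/-- Row sample space. -/
noncomputable def rowP (d : ℕ) : Finset (Fin d → ℝ) := Fintype.piFinset fun _ => S

/-- Row weight. -/
noncomputable def rowW (p : ℝ) (d : ℕ) : (Fin d → ℝ) → ℝ := piW (wf p)

/-- Row expectation. -/
noncomputable def Er (p : ℝ) (d : ℕ) (f : (Fin d → ℝ) → ℝ) : ℝ := Exp (rowP d) (rowW p d) f

lemma rowW_nonneg (hp : 0 < p) (hp2 : p ≤ 1 / 2) :
    ∀ ρ ∈ rowP d, 0 ≤ rowW p d ρ := by
  intro ρ _
  unfold rowW piW
  exact Finset.prod_nonneg fun i _ => wf_nonneg hp hp2 _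

lemma rowW_total : ∑ ρ ∈ rowP d, rowW p d ρ = 1 := piW_total _ _ (sumS_one p)

lemma Er_single (j : Fin d) (h : ℝ → ℝ) :
    Er p d (fun ρ => h (ρ j)) = p * h 1 + p * h (-1) + (1 - 2 * p) * h 0 :=
  (Exp_pi_single S (wf p) (sumS_one p) j h).trans (sumS p h)

lemma Er_pair {j k : Fin d} (hjk : j ≠ k) (f g : ℝ → ℝ) :
    Er p d (fun ρ => f (ρ j) * g (ρ k))
      = (p * f 1 + p * f (-1) + (1 - 2 * p) * f 0)
        * (p * g 1 + p * g (-1) + (1 - 2 * p) * g 0) := by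
  rw [Er, rowP, rowW, Exp_pi_pair S (wf p) (sumS_one p) hjk f g, sumS, sumS]

lemma Er_flip (j : Fin d) (f : (Fin d → ℝ) → ℝ) :
    Er p d f = Er p d (fun ρ => f (Function.update ρ j (-ρ j))) :=
  Exp_pi_flip S (wf p) S_neg (wf_even p) j f

lemma rowP_entries {ρ : Fin d → ℝ} (hρ : ρ ∈ rowP d) (k : Fin d) :
    ρ k = -1 ∨ ρ k = 0 ∨ ρ k = 1 :=
  mem_S_cases (Fintype.mem_piFinset.1 hρ k)

lemma rowP_abs_eq_sq {ρ : Fin d → ℝ} (hρ : ρ ∈ rowP d) (k : Fin d) :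
    |ρ k| = (ρ k) ^ 2 := by
  rcases rowP_entries hρ k with h | h | h <;> rw [h] <;> norm_num

end Row


section RowBounds

variable {d : ℕ} {p : ℝ}

lemma signQ_abs (y : ℝ) : |signQ y| = 1 := by
  unfold signQ; split_ifs <;> norm_num

/-- Number of nonzero entries (as sum of squares). -/
noncomputable def Nf (d : ℕ) : (Fin d → ℝ) → ℝ := fun ρ => ∑ k, (ρ k) ^ 2

lemma Nf_nonneg (ρ : Fin d → ℝ) : 0 ≤ Nf d ρ :=
  Finset.sum_nonneg fun k _ => sq_nonneg _

lemma Nf_update (ρ : Fin d → ℝ) (j : Fin d) :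
    Nf d (Function.update ρ j (-ρ j)) = Nf d ρ := by
  unfold Nf
  apply Finset.sum_congr rfl
  intro i _
  rcases eq_or_ne i j with rfl | hij
  · rw [Function.update_self]; ring
  · rw [Function.update_of_ne hij]

lemma row_sq_marg (a : Fin d) : Er p d (fun ρ => (ρ a) ^ 2) = 2 * p := by
  have := Er_single (p := p) a (fun v => v ^ 2)
  norm_num at this
  rw [this]; ring

lemma row_q_sq (x : Fin d → ℝ) (a : Fin d) :
    Er p d (fun ρ => (ρ a * signQ (∑ j, ρ j * x j)) ^ 2) = 2 * p := by
  have he : ∀ ρ : Fin d → ℝ, (ρ a * signQ (∑ j, ρ j * x j)) ^ 2 = (ρ a) ^ 2 := by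
    intro ρ
    rw [mul_pow, signQ_sq, mul_one]
  have h1 : Er p d (fun ρ => (ρ a * signQ (∑ j, ρ j * x j)) ^ 2)
      = Er p d (fun ρ => (ρ a) ^ 2) := Exp_congr fun ρ _ => he ρ
  rw [h1, row_sq_marg]

lemma row_abs_marg (a : Fin d) : Er p d (fun ρ => |ρ a|) = 2 * p := by
  have := Er_single (p := p) a (fun v => |v|)
  norm_num at this
  rw [this]; ring

lemma row_q_bound (hp : 0 < p) (hp2 : p ≤ 1 / 2) (x : Fin d → ℝ) (a : Fin d) :
    |Er p d (fun ρ => ρ a * signQ (∑ j, ρ j * x j))| ≤ 2 * p := by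
  have h1 : |Er p d (fun ρ => ρ a * signQ (∑ j, ρ j * x j))|
      ≤ Er p d (fun ρ => |ρ a * signQ (∑ j, ρ j * x j)|) :=
    Exp_abs (rowW_nonneg hp hp2) _
  have h2 : Er p d (fun ρ => |ρ a * signQ (∑ j, ρ j * x j)|) = Er p d (fun ρ => |ρ a|) :=
    Exp_congr fun ρ _ => by rw [abs_mul, signQ_abs, mul_one]
  rw [h2, row_abs_marg] at h1
  exact h1

lemma cross_zero {j k : Fin d} (hjk : j ≠ k) :
    Er p d (fun ρ => ρ j * ρ k / Nf d ρ) = 0 := by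
  have h := Er_flip (p := p) j (fun ρ => ρ j * ρ k / Nf d ρ)
  have h2 : Er p d (fun ρ => (fun ρ : Fin d → ℝ => ρ j * ρ k / Nf d ρ)
        (Function.update ρ j (-ρ j)))
      = Er p d (fun ρ => -(ρ j * ρ k / Nf d ρ)) := by
    apply Exp_congr
    intro ρ _
    dsimp only
    rw [Function.update_self, Function.update_of_ne (Ne.symm hjk), Nf_update]
    ring
  have h3 : Er p d (fun ρ => -(ρ j * ρ k / Nf d ρ))
      = - Er p d (fun ρ => ρ j * ρ k / Nf d ρ) := Exp_neg _
  have h4 : Er p d (fun ρ => ρ j * ρ k / Nf d ρ)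
      = - Er p d (fun ρ => ρ j * ρ k / Nf d ρ) := h.trans (h2.trans h3)
  linarith

lemma diag_lower (hp : 0 < p) (hp2 : p ≤ 1 / 2) (hd : 0 < d) (j : Fin d) :
    2 * p / (1 + 2 * p * d) ≤ Er p d (fun ρ => ρ j * ρ j / Nf d ρ) := by
  have hd1 : (1 : ℝ) ≤ (d : ℝ) := by exact_mod_cast hd
  set m : ℝ := 2 * p * ((d : ℝ) - 1) with hm
  have hm0 : 0 ≤ m := by
    rw [hm]
    apply mul_nonneg (by linarith) (by linarith)
  have h1m : (0 : ℝ) < 1 + m := by linarith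
  have hEN : Er p d (fun ρ => (ρ j) ^ 2 * Nf d ρ) = 2 * p * (1 + m) := by
    have e1 : Er p d (fun ρ => (ρ j) ^ 2 * Nf d ρ)
        = Er p d (fun ρ => ∑ k, (ρ j) ^ 2 * (ρ k) ^ 2) := by
      apply Exp_congr
      intro ρ _
      rw [Nf, Finset.mul_sum]
    have e2 : Er p d (fun ρ => ∑ k, (ρ j) ^ 2 * (ρ k) ^ 2)
        = ∑ k, Er p d (fun ρ => (ρ j) ^ 2 * (ρ k) ^ 2) := Exp_sum _ _
    have e3 : ∀ k : Fin d, Er p d (fun ρ => (ρ j) ^ 2 * (ρ k) ^ 2)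
        = if k = j then 2 * p else 4 * p ^ 2 := by
      intro k
      rcases eq_or_ne k j with rfl | hkj
      · rw [if_pos rfl]
        have := Er_single (p := p) k (fun v => v ^ 2 * v ^ 2)
        norm_num at this
        rw [this]; ring
      · rw [if_neg hkj]
        have := Er_pair (p := p) (Ne.symm hkj) (fun v => v ^ 2) (fun v => v ^ 2)
        norm_num at this
        rw [this]; ring
    have e4 : ∑ k : Fin d, (if k = j then 2 * p else 4 * p ^ 2)
        = (d : ℝ) * (4 * p ^ 2) + (2 * p - 4 * p ^ 2) := by
      have : ∀ k : Fin d, (if k = j then 2 * p else 4 * p ^ 2)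
          = 4 * p ^ 2 + (if k = j then 2 * p - 4 * p ^ 2 else 0) := by
        intro k; split_ifs <;> ring
      rw [Finset.sum_congr rfl fun k _ => this k, Finset.sum_add_distrib,
        Finset.sum_const, Finset.sum_ite_eq' Finset.univ j fun _ => 2 * p - 4 * p ^ 2,
        if_pos (Finset.mem_univ j)]
      simp [Finset.card_univ, mul_comm]
    rw [e1, e2, Finset.sum_congr rfl fun k _ => e3 k, e4, hm]
    ring
  have hE2 : Er p d (fun ρ => (ρ j) ^ 2) = 2 * p := row_sq_marg j
  have hpt : ∀ ρ ∈ rowP d,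
      (1 / (1 + m)) * (ρ j) ^ 2 + (1 / (1 + m) ^ 2) * ((1 + m) * (ρ j) ^ 2
        - (ρ j) ^ 2 * Nf d ρ) ≤ ρ j * ρ j / Nf d ρ := by
    intro ρ hρ
    have hsq : (ρ j) ^ 2 = 0 ∨ (ρ j) ^ 2 = 1 := by
      rcases rowP_entries hρ j with h | h | h <;> rw [h] <;> norm_num
    rcases hsq with h | h
    · have hj0 : ρ j = 0 := by nlinarith [sq_nonneg (ρ j)]
      rw [hj0]
      simp
    · have hN1 : 1 ≤ Nf d ρ := by
        have hle := Finset.single_le_sum (f := fun k => (ρ k) ^ 2)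
          (fun k _ => sq_nonneg _) (Finset.mem_univ j)
        rw [Nf]; linarith
      have hN0 : (0 : ℝ) < Nf d ρ := lt_of_lt_of_le one_pos hN1
      have hjj : ρ j * ρ j = 1 := by rw [← pow_two]; exact h
      rw [h, hjj]
      have key : 1 / Nf d ρ - ((1 / (1 + m)) * 1 + (1 / (1 + m) ^ 2) * ((1 + m) * 1
          - 1 * Nf d ρ)) = (Nf d ρ - (1 + m)) ^ 2 / (Nf d ρ * (1 + m) ^ 2) := by
        field_simp
        ring
      have hpos : 0 ≤ (Nf d ρ - (1 + m)) ^ 2 / (Nf d ρ * (1 + m) ^ 2) := by positivity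
      linarith [key]
  have hmono := Exp_mono (rowW_nonneg hp hp2) hpt
  have hE2' : Exp (rowP d) (rowW p d) (fun ρ : Fin d → ℝ => (ρ j) ^ 2) = 2 * p := hE2
  have hEN' : Exp (rowP d) (rowW p d) (fun ρ : Fin d → ℝ => (ρ j) ^ 2 * Nf d ρ)
      = 2 * p * (1 + m) := hEN
  have hlhs : Exp (rowP d) (rowW p d) (fun ρ : Fin d → ℝ => (1 / (1 + m)) * (ρ j) ^ 2
      + (1 / (1 + m) ^ 2) * ((1 + m) * (ρ j) ^ 2 - (ρ j) ^ 2 * Nf d ρ))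
      = 2 * p / (1 + m) := by
    rw [Exp_add, Exp_const_mul, Exp_const_mul, Exp_sub, Exp_const_mul, hE2', hEN']
    field_simp
    ring
  rw [hlhs] at hmono
  refine le_trans ?_ hmono
  have hden : 1 + m ≤ 1 + 2 * p * (d : ℝ) := by
    rw [hm]; nlinarith
  have hden0 : (0 : ℝ) < 1 + 2 * p * (d : ℝ) := by nlinarith
  apply div_le_div_of_nonneg_left (by linarith) h1m hden


lemma row_lower (hp : 0 < p) (hp2 : p ≤ 1 / 2) (hd : 0 < d) (x : Fin d → ℝ) :
    2 * p * (∑ i, |x i|) / (1 + 2 * p * d) ≤ Er p d (fun ρ => |∑ j, ρ j * x j|) := by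
  set sg : Fin d → ℝ := fun k => if x k < 0 then -1 else 1 with hsg
  have hsg_abs : ∀ k, |sg k| = 1 := by
    intro k; rw [hsg]; dsimp only; split_ifs <;> norm_num
  have hxsg : ∀ k, x k * sg k = |x k| := by
    intro k; rw [hsg]; dsimp only; split_ifs with h
    · rw [abs_of_neg h]; ring
    · rw [abs_of_nonneg (not_lt.1 h)]; ring
  have hpt : ∀ ρ ∈ rowP d,
      (∑ j, ρ j * x j) * ((∑ k, ρ k * sg k) / Nf d ρ) ≤ |∑ j, ρ j * x j| := by
    intro ρ hρ
    have hTN : |∑ k, ρ k * sg k| ≤ Nf d ρ := by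
      refine le_trans (Finset.abs_sum_le_sum_abs _ _) ?_
      rw [Nf]
      apply Finset.sum_le_sum
      intro k _
      rw [abs_mul, hsg_abs k, mul_one]
      exact le_of_eq (rowP_abs_eq_sq hρ k)
    have hN0 : 0 ≤ Nf d ρ := Nf_nonneg ρ
    rcases eq_or_lt_of_le hN0 with h0 | h0
    · rw [← h0, div_zero, mul_zero]; exact abs_nonneg _
    · calc (∑ j, ρ j * x j) * ((∑ k, ρ k * sg k) / Nf d ρ)
          ≤ |(∑ j, ρ j * x j) * ((∑ k, ρ k * sg k) / Nf d ρ)| := le_abs_self _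
        _ = |∑ j, ρ j * x j| * (|∑ k, ρ k * sg k| / Nf d ρ) := by
            rw [abs_mul, abs_div, abs_of_pos h0]
        _ ≤ |∑ j, ρ j * x j| * 1 :=
            mul_le_mul_of_nonneg_left ((div_le_one h0).2 hTN) (abs_nonneg _)
        _ = |∑ j, ρ j * x j| := mul_one _
  have step1 : Er p d (fun ρ => (∑ j, ρ j * x j) * ((∑ k, ρ k * sg k) / Nf d ρ))
      ≤ Er p d (fun ρ => |∑ j, ρ j * x j|) := Exp_mono (rowW_nonneg hp hp2) hpt
  have hexp : ∀ ρ : Fin d → ℝ, (∑ j, ρ j * x j) * ((∑ k, ρ k * sg k) / Nf d ρ)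
      = ∑ j, ∑ k, (x j * sg k) * (ρ j * ρ k / Nf d ρ) := by
    intro ρ
    rw [← mul_div_assoc, Finset.sum_mul_sum, Finset.sum_div]
    apply Finset.sum_congr rfl; intro j _
    rw [Finset.sum_div]
    apply Finset.sum_congr rfl; intro k _
    ring
  have step2 : Er p d (fun ρ => (∑ j, ρ j * x j) * ((∑ k, ρ k * sg k) / Nf d ρ))
      = ∑ j, ∑ k, (x j * sg k) * Er p d (fun ρ => ρ j * ρ k / Nf d ρ) := by
    calc Er p d (fun ρ => (∑ j, ρ j * x j) * ((∑ k, ρ k * sg k) / Nf d ρ))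
        = Er p d (fun ρ => ∑ j, ∑ k, (x j * sg k) * (ρ j * ρ k / Nf d ρ)) :=
          Exp_congr fun ρ _ => hexp ρ
      _ = ∑ j, Er p d (fun ρ => ∑ k, (x j * sg k) * (ρ j * ρ k / Nf d ρ)) :=
          Exp_sum _ _
      _ = ∑ j, ∑ k, Er p d (fun ρ => (x j * sg k) * (ρ j * ρ k / Nf d ρ)) :=
          Finset.sum_congr rfl fun j _ => Exp_sum _ _
      _ = ∑ j, ∑ k, (x j * sg k) * Er p d (fun ρ => ρ j * ρ k / Nf d ρ) :=
          Finset.sum_congr rfl fun j _ => Finset.sum_congr rfl fun k _ =>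
            Exp_const_mul _ _
  have hinner : ∀ j, ∑ k, (x j * sg k) * Er p d (fun ρ => ρ j * ρ k / Nf d ρ)
      = |x j| * Er p d (fun ρ => ρ j * ρ j / Nf d ρ) := by
    intro j
    rw [Finset.sum_eq_single j]
    · rw [hxsg j]
    · intro k _ hkj
      rw [cross_zero (Ne.symm hkj)]
      ring
    · intro h; exact absurd (Finset.mem_univ j) h
  have hdiag : ∀ j : Fin d, 2 * p / (1 + 2 * p * d)
      ≤ Er p d (fun ρ => ρ j * ρ j / Nf d ρ) := fun j => diag_lower hp hp2 hd j
  calc 2 * p * (∑ i, |x i|) / (1 + 2 * p * d)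
      = ∑ j, |x j| * (2 * p / (1 + 2 * p * d)) := by
        rw [← Finset.sum_mul]; ring
    _ ≤ ∑ j, |x j| * Er p d (fun ρ => ρ j * ρ j / Nf d ρ) :=
        Finset.sum_le_sum fun j _ => mul_le_mul_of_nonneg_left (hdiag j) (abs_nonneg _)
    _ = ∑ j, ∑ k, (x j * sg k) * Er p d (fun ρ => ρ j * ρ k / Nf d ρ) :=
        (Finset.sum_congr rfl fun j _ => (hinner j)).symm
    _ = Er p d (fun ρ => (∑ j, ρ j * x j) * ((∑ k, ρ k * sg k) / Nf d ρ)) := step2.symm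
    _ ≤ Er p d (fun ρ => |∑ j, ρ j * x j|) := step1

end RowBounds


section MatrixLevel

variable {s d : ℕ} {p : ℝ}

/-- Matrix sample space. -/
noncomputable def matP (s d : ℕ) : Finset (Fin s → Fin d → ℝ) :=
  Fintype.piFinset fun _ => rowP d

/-- Matrix weight. -/
noncomputable def matW (p : ℝ) (s d : ℕ) : (Fin s → Fin d → ℝ) → ℝ := piW (rowW p d)

/-- Matrix expectation. -/
noncomputable def Em (p : ℝ) (s d : ℕ) (f : (Fin s → Fin d → ℝ) → ℝ) : ℝ :=
  Exp (matP s d) (matW p s d) f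

lemma matW_nonneg (hp : 0 < p) (hp2 : p ≤ 1 / 2) :
    ∀ M ∈ matP s d, 0 ≤ matW p s d M := fun M hM =>
  piW_nonneg _ _ (rowW_nonneg hp hp2) M hM

lemma matW_total : ∑ M ∈ matP s d, matW p s d M = 1 :=
  piW_total _ _ rowW_total

lemma Em_single (i : Fin s) (f : (Fin d → ℝ) → ℝ) :
    Em p s d (fun M => f (M i)) = Er p d f :=
  Exp_pi_single (rowP d) (rowW p d) rowW_total i f

lemma Em_pair {i i' : Fin s} (h : i ≠ i') (f g : (Fin d → ℝ) → ℝ) :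
    Em p s d (fun M => f (M i) * g (M i')) = Er p d f * Er p d g :=
  Exp_pi_pair (rowP d) (rowW p d) rowW_total h f g

lemma Em_add (f g : (Fin s → Fin d → ℝ) → ℝ) :
    Em p s d (fun M => f M + g M) = Em p s d f + Em p s d g := Exp_add f g

lemma Em_sub (f g : (Fin s → Fin d → ℝ) → ℝ) :
    Em p s d (fun M => f M - g M) = Em p s d f - Em p s d g := Exp_sub f g

lemma Em_const_mul (c : ℝ) (f : (Fin s → Fin d → ℝ) → ℝ) :
    Em p s d (fun M => c * f M) = c * Em p s d f := Exp_const_mul c f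

lemma Em_sum {A : Type*} (t : Finset A) (f : A → (Fin s → Fin d → ℝ) → ℝ) :
    Em p s d (fun M => ∑ a ∈ t, f a M) = ∑ a ∈ t, Em p s d (f a) := Exp_sum t f

lemma Em_const (c : ℝ) : Em p s d (fun _ => c) = c := Exp_const matW_total c

end MatrixLevel


section MainBound

lemma main_bound (s d : ℕ) (hs : 0 < s) (hd : 0 < d) (p : ℝ) (hp : 0 < p)
    (hp2 : p ≤ 1 / 2) (x : Fin d → ℝ) (bx : ℝ)
    (hbx : bx = (∑ i, |x i|) / ((d : ℝ) * (1 + 2 * s * p) * (1 + 2 * p * d))) :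
    Em p s d (fun M => ∑ a, (bx * (∑ i, M i a * signQ (∑ j, M i j * x j)) - x a) ^ 2)
      ≤ (∑ a, x a ^ 2)
        - 2 * s * p * (∑ i, |x i|) ^ 2
          / ((d : ℝ) * (1 + 2 * s * p) * (1 + 2 * p * d) ^ 2) := by
  have hd0 : (0 : ℝ) < (d : ℝ) := by exact_mod_cast hd
  have hs0 : (0 : ℝ) < (s : ℝ) := by exact_mod_cast hs
  have hA : (0 : ℝ) < 1 + 2 * s * p := by positivity
  have hB : (0 : ℝ) < 1 + 2 * p * d := by positivity
  have hL : (0 : ℝ) ≤ ∑ i, |x i| := Finset.sum_nonneg fun i _ => abs_nonneg _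
  have hbx0 : 0 ≤ bx := by rw [hbx]; positivity
  -- pointwise expansion
  have hCx : ∀ M : Fin s → Fin d → ℝ,
      ∑ a, (∑ i, M i a * signQ (∑ j, M i j * x j)) * x a
        = ∑ i, |∑ j, M i j * x j| := by
    intro M
    calc ∑ a, (∑ i, M i a * signQ (∑ j, M i j * x j)) * x a
        = ∑ a, ∑ i, (M i a * signQ (∑ j, M i j * x j)) * x a := by
          apply Finset.sum_congr rfl; intro a _; rw [Finset.sum_mul]
      _ = ∑ i, ∑ a, (M i a * signQ (∑ j, M i j * x j)) * x a := Finset.sum_comm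
      _ = ∑ i, |∑ j, M i j * x j| := by
          apply Finset.sum_congr rfl; intro i _
          have e : ∑ a, (M i a * signQ (∑ j, M i j * x j)) * x a
              = signQ (∑ j, M i j * x j) * ∑ a, M i a * x a := by
            rw [Finset.mul_sum]
            apply Finset.sum_congr rfl; intro a _; ring
          rw [e, signQ_mul]
  have hpt : ∀ M : Fin s → Fin d → ℝ,
      ∑ a, (bx * (∑ i, M i a * signQ (∑ j, M i j * x j)) - x a) ^ 2
        = bx ^ 2 * (∑ a, ∑ i, ∑ i', (M i a * signQ (∑ j, M i j * x j))
              * (M i' a * signQ (∑ j, M i' j * x j)))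
          - 2 * bx * (∑ i, |∑ j, M i j * x j|) + ∑ a, x a ^ 2 := by
    intro M
    have e1 : ∀ a : Fin d,
        (bx * (∑ i, M i a * signQ (∑ j, M i j * x j)) - x a) ^ 2
          = bx ^ 2 * ((∑ i, M i a * signQ (∑ j, M i j * x j))
              * (∑ i', M i' a * signQ (∑ j, M i' j * x j)))
            - 2 * bx * ((∑ i, M i a * signQ (∑ j, M i j * x j)) * x a) + x a ^ 2 := by
      intro a; ring
    rw [Finset.sum_congr rfl fun a _ => e1 a]
    rw [Finset.sum_add_distrib, Finset.sum_sub_distrib, ← Finset.mul_sum, ← Finset.mul_sum]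
    rw [hCx M]
    have e2 : ∑ a, (∑ i, M i a * signQ (∑ j, M i j * x j))
          * (∑ i', M i' a * signQ (∑ j, M i' j * x j))
        = ∑ a, ∑ i, ∑ i', (M i a * signQ (∑ j, M i j * x j))
            * (M i' a * signQ (∑ j, M i' j * x j)) :=
      Finset.sum_congr rfl fun a _ => Finset.sum_mul_sum _ _ _ _
    rw [e2]
  -- expectation expansion
  have hEexp : Em p s d (fun M => ∑ a,
        (bx * (∑ i, M i a * signQ (∑ j, M i j * x j)) - x a) ^ 2)
      = bx ^ 2 * (∑ a : Fin d, ∑ i : Fin s, ∑ i' : Fin s,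
            Em p s d (fun M => (M i a * signQ (∑ j, M i j * x j))
              * (M i' a * signQ (∑ j, M i' j * x j))))
        - 2 * bx * (∑ i : Fin s, Em p s d (fun M => |∑ j, M i j * x j|))
        + ∑ a, x a ^ 2 := by
    calc Em p s d (fun M => ∑ a,
          (bx * (∑ i, M i a * signQ (∑ j, M i j * x j)) - x a) ^ 2)
        = Em p s d (fun M =>
            bx ^ 2 * (∑ a, ∑ i, ∑ i', (M i a * signQ (∑ j, M i j * x j))
              * (M i' a * signQ (∑ j, M i' j * x j)))
            - 2 * bx * (∑ i, |∑ j, M i j * x j|) + ∑ a, x a ^ 2) :=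
          Exp_congr fun M _ => hpt M
      _ = _ := by
          rw [Em_add, Em_sub, Em_const_mul, Em_const_mul, Em_const (p := p) (∑ a, x a ^ 2)]
          congr 2
          · congr 1
            rw [Em_sum]
            apply Finset.sum_congr rfl; intro a _
            rw [Em_sum]
            apply Finset.sum_congr rfl; intro i _
            rw [Em_sum]
          · congr 1
            rw [Em_sum]
  -- bound the quadratic term
  have hT2 : (∑ a : Fin d, ∑ i : Fin s, ∑ i' : Fin s,
        Em p s d (fun M => (M i a * signQ (∑ j, M i j * x j))
          * (M i' a * signQ (∑ j, M i' j * x j))))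
      ≤ (d : ℝ) * ((s : ℝ) * ((s : ℝ) * (4 * p ^ 2) + (2 * p - 4 * p ^ 2))) := by
    have hterm : ∀ (a : Fin d) (i i' : Fin s),
        Em p s d (fun M => (M i a * signQ (∑ j, M i j * x j))
          * (M i' a * signQ (∑ j, M i' j * x j)))
        ≤ if i' = i then 2 * p else 4 * p ^ 2 := by
      intro a i i'
      rcases eq_or_ne i' i with rfl | hii
      · rw [if_pos rfl]
        have e : Em p s d (fun M => (M i' a * signQ (∑ j, M i' j * x j))
            * (M i' a * signQ (∑ j, M i' j * x j)))
            = Er p d (fun ρ => (ρ a * signQ (∑ j, ρ j * x j)) ^ 2) := by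
          have := Em_single (p := p) i' (fun ρ : Fin d → ℝ =>
            (ρ a * signQ (∑ j, ρ j * x j)) ^ 2)
          rw [← this]
          apply Exp_congr; intro M _
          ring
        rw [e, row_q_sq]
      · have e := Em_pair (p := p) (Ne.symm hii)
          (fun ρ : Fin d → ℝ => ρ a * signQ (∑ j, ρ j * x j))
          (fun ρ : Fin d → ℝ => ρ a * signQ (∑ j, ρ j * x j))
        rw [if_neg hii, e]
        have hq := row_q_bound (p := p) hp hp2 x a
        have habs : Er p d (fun ρ => ρ a * signQ (∑ j, ρ j * x j))
            * Er p d (fun ρ => ρ a * signQ (∑ j, ρ j * x j))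
            ≤ (2 * p) * (2 * p) := by
          have h1 := abs_mul_abs_self (Er p d (fun ρ => ρ a * signQ (∑ j, ρ j * x j)))
          nlinarith [abs_nonneg (Er p d (fun ρ => ρ a * signQ (∑ j, ρ j * x j)))]
        nlinarith
    calc (∑ a : Fin d, ∑ i : Fin s, ∑ i' : Fin s,
          Em p s d (fun M => (M i a * signQ (∑ j, M i j * x j))
            * (M i' a * signQ (∑ j, M i' j * x j))))
        ≤ ∑ a : Fin d, ∑ i : Fin s, ∑ i' : Fin s, (if i' = i then 2 * p else 4 * p ^ 2) :=
          Finset.sum_le_sum fun a _ => Finset.sum_le_sum fun i _ =>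
            Finset.sum_le_sum fun i' _ => hterm a i i'
      _ = (d : ℝ) * ((s : ℝ) * ((s : ℝ) * (4 * p ^ 2) + (2 * p - 4 * p ^ 2))) := by
          have einner : ∀ i : Fin s, (∑ i' : Fin s, if i' = i then 2 * p else 4 * p ^ 2)
              = (s : ℝ) * (4 * p ^ 2) + (2 * p - 4 * p ^ 2) := by
            intro i
            have : ∀ i' : Fin s, (if i' = i then 2 * p else 4 * p ^ 2)
                = 4 * p ^ 2 + (if i' = i then 2 * p - 4 * p ^ 2 else 0) := by
              intro i'; split_ifs <;> ring
            rw [Finset.sum_congr rfl fun i' _ => this i', Finset.sum_add_distrib,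
              Finset.sum_const, Finset.sum_ite_eq' Finset.univ i fun _ => 2 * p - 4 * p ^ 2,
              if_pos (Finset.mem_univ i)]
            simp [Finset.card_univ]
          rw [Finset.sum_congr rfl fun i (_ : i ∈ Finset.univ) => einner i]
          simp [Finset.sum_const, Finset.card_univ]
          ring
  -- bound the linear term
  have hT1 : (s : ℝ) * (2 * p * (∑ i, |x i|) / (1 + 2 * p * d))
      ≤ ∑ i : Fin s, Em p s d (fun M => |∑ j, M i j * x j|) := by
    have : ∀ i : Fin s, 2 * p * (∑ i, |x i|) / (1 + 2 * p * d)
        ≤ Em p s d (fun M => |∑ j, M i j * x j|) := by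
      intro i
      have e := Em_single (p := p) i (fun ρ : Fin d → ℝ => |∑ j, ρ j * x j|)
      rw [e]
      exact row_lower hp hp2 hd x
    calc (s : ℝ) * (2 * p * (∑ i, |x i|) / (1 + 2 * p * d))
        = ∑ _i : Fin s, 2 * p * (∑ i, |x i|) / (1 + 2 * p * d) := by
          simp [Finset.sum_const, Finset.card_univ]
      _ ≤ _ := Finset.sum_le_sum fun i _ => this i
  -- combine
  rw [hEexp]
  have c1 : bx ^ 2 * (∑ a : Fin d, ∑ i : Fin s, ∑ i' : Fin s,
        Em p s d (fun M => (M i a * signQ (∑ j, M i j * x j))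
          * (M i' a * signQ (∑ j, M i' j * x j))))
      ≤ bx ^ 2 * ((d : ℝ) * ((s : ℝ) * ((s : ℝ) * (4 * p ^ 2) + (2 * p - 4 * p ^ 2)))) :=
    mul_le_mul_of_nonneg_left hT2 (sq_nonneg bx)
  have c2 : 2 * bx * ((s : ℝ) * (2 * p * (∑ i, |x i|) / (1 + 2 * p * d)))
      ≤ 2 * bx * (∑ i : Fin s, Em p s d (fun M => |∑ j, M i j * x j|)) :=
    mul_le_mul_of_nonneg_left hT1 (by linarith)
  have key : bx ^ 2 * ((d : ℝ) * ((s : ℝ) * ((s : ℝ) * (4 * p ^ 2) + (2 * p - 4 * p ^ 2))))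
      - 2 * bx * ((s : ℝ) * (2 * p * (∑ i, |x i|) / (1 + 2 * p * d)))
      + (∑ a, x a ^ 2)
      - ((∑ a, x a ^ 2) - 2 * s * p * (∑ i, |x i|) ^ 2
          / ((d : ℝ) * (1 + 2 * s * p) * (1 + 2 * p * d) ^ 2))
      = -(4 * p ^ 2 * s * (∑ i, |x i|) ^ 2)
          / ((d : ℝ) * (1 + 2 * s * p) ^ 2 * (1 + 2 * p * d) ^ 2) := by
    rw [hbx]
    field_simp
    ring
  have hneg : -(4 * p ^ 2 * s * (∑ i, |x i|) ^ 2)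
      / ((d : ℝ) * (1 + 2 * s * p) ^ 2 * (1 + 2 * p * d) ^ 2) ≤ 0 := by
    apply div_nonpos_of_nonpos_of_nonneg
    · rw [neg_nonpos]
      positivity
    · positivity
  linarith

end MainBound


section Bridge

open MeasureTheory ProbabilityTheory

lemma entryLaw_singleton {p : ℝ} (v : ℝ) (hv : v ∈ S) :
    entryLaw p {v} = ENNReal.ofReal (wf p v) := by
  rcases mem_S_cases hv with h | h | h <;> subst h <;>
    simp [entryLaw, wf, Measure.dirac_apply, Measure.add_apply, Measure.smul_apply] <;>
    norm_num

lemma entryLaw_compl_S {p : ℝ} : entryLaw p ((↑S : Set ℝ))ᶜ = 0 := by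
  have h1 : (1 : ℝ) ∈ (↑S : Set ℝ) := by norm_num [S]
  have h2 : (-1 : ℝ) ∈ (↑S : Set ℝ) := by norm_num [S]
  have h3 : (0 : ℝ) ∈ (↑S : Set ℝ) := by norm_num [S]
  simp [entryLaw, Measure.dirac_apply, Measure.add_apply, Measure.smul_apply,
    Set.indicator_of_notMem, h1, h2, h3]

lemma integral_eq_Em {Ω : Type*} [MeasurableSpace Ω] (μ : Measure Ω)
    [IsProbabilityMeasure μ]
    (s d : ℕ) (p : ℝ) (hp : 0 < p) (hp2 : p ≤ 1 / 2)
    (Φ : Ω → Matrix (Fin s) (Fin d) ℝ)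
    (hmeas : ∀ i j, Measurable fun ω => Φ ω i j)
    (hindep : iIndepFun
      (fun (ij : Fin s × Fin d) ω => Φ ω ij.1 ij.2) μ)
    (hlaw : ∀ i j, Measure.map (fun ω => Φ ω i j) μ = entryLaw p)
    (G : (Fin s → Fin d → ℝ) → ℝ) :
    ∫ ω, G (fun i j => Φ ω i j) ∂μ = Em p s d G := by
  classical
  -- the matrix of entries lies in `matP` a.e.
  have hcompl : ∀ i j, μ ((fun ω => Φ ω i j) ⁻¹' ((↑S : Set ℝ))ᶜ) = 0 := by
    intro i j
    rw [← Measure.map_apply (hmeas i j) (S.measurableSet.compl), hlaw i j]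
    exact entryLaw_compl_S
  have hae : ∀ᵐ ω ∂μ, (fun i j => Φ ω i j) ∈ matP s d := by
    have h1 : ∀ᵐ ω ∂μ, ∀ (i : Fin s) (j : Fin d), Φ ω i j ∈ S := by
      rw [ae_all_iff]
      intro i
      rw [ae_all_iff]
      intro j
      rw [ae_iff]
      exact hcompl i j
    filter_upwards [h1] with ω hω
    exact Fintype.mem_piFinset.2 fun i => Fintype.mem_piFinset.2 fun j => hω i j
  -- events
  have hAeq : ∀ M : Fin s → Fin d → ℝ, {ω | (fun i j => Φ ω i j) = M}
      = ⋂ ij : Fin s × Fin d, (fun ω => Φ ω ij.1 ij.2) ⁻¹' {M ij.1 ij.2} := by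
    intro M
    ext ω
    simp only [Set.mem_setOf_eq, funext_iff, Set.mem_iInter, Set.mem_preimage,
      Set.mem_singleton_iff, Prod.forall]
  have hAmeas : ∀ M : Fin s → Fin d → ℝ, MeasurableSet {ω | (fun i j => Φ ω i j) = M} := by
    intro M
    rw [hAeq]
    exact MeasurableSet.iInter fun ij => (hmeas ij.1 ij.2) (measurableSet_singleton _)
  have hAmeasure : ∀ M : Fin s → Fin d → ℝ,
      μ {ω | (fun i j => Φ ω i j) = M} = ∏ ij : Fin s × Fin d, entryLaw p {M ij.1 ij.2} := by
    intro M
    have := hindep.measure_inter_preimage_eq_mul (S := Finset.univ)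
      (sets := fun ij => {M ij.1 ij.2}) (fun ij _ => measurableSet_singleton _)
    have e1 : (⋂ ij : Fin s × Fin d, (fun ω => Φ ω ij.1 ij.2) ⁻¹' {M ij.1 ij.2})
        = ⋂ ij ∈ (Finset.univ : Finset (Fin s × Fin d)),
            (fun ω => Φ ω ij.1 ij.2) ⁻¹' (fun ij => ({M ij.1 ij.2} : Set ℝ)) ij := by
      simp
    rw [hAeq, e1, this]
    refine Finset.prod_congr rfl fun ij _ => ?_
    rw [← Measure.map_apply (hmeas ij.1 ij.2) (measurableSet_singleton _), hlaw ij.1 ij.2]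
  have hAweight : ∀ M ∈ matP s d, (μ {ω | (fun i j => Φ ω i j) = M}).toReal = matW p s d M := by
    intro M hM
    have hmem : ∀ i j, M i j ∈ S := fun i j =>
      Fintype.mem_piFinset.1 (Fintype.mem_piFinset.1 hM i) j
    rw [hAmeasure M]
    rw [Finset.prod_congr rfl fun (ij : Fin s × Fin d) _ =>
      entryLaw_singleton (p := p) (M ij.1 ij.2) (hmem ij.1 ij.2)]
    rw [← ENNReal.ofReal_prod_of_nonneg (fun ij _ => wf_nonneg hp hp2 _)]
    rw [ENNReal.toReal_ofReal (Finset.prod_nonneg fun ij _ => wf_nonneg hp hp2 _)]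
    rw [Fintype.prod_prod_type]
    rfl
  -- rewrite the integrand as a finite sum of indicators
  have hsimple : ∀ᵐ ω ∂μ, G (fun i j => Φ ω i j)
      = ∑ M ∈ matP s d, if (fun i j => Φ ω i j) = M then G M else 0 := by
    filter_upwards [hae] with ω hω
    rw [Finset.sum_ite_eq (matP s d) (fun i j => Φ ω i j) G, if_pos hω]
  rw [integral_congr_ae hsimple]
  have hind : ∀ M : Fin s → Fin d → ℝ, (fun ω => if (fun i j => Φ ω i j) = M then G M else 0)
      = Set.indicator {ω | (fun i j => Φ ω i j) = M} (fun _ => G M) := by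
    intro M
    funext ω
    by_cases h : (fun i j => Φ ω i j) = M
    · simp [Set.indicator_apply, h]
    · simp [Set.indicator_apply, h]
  rw [integral_finset_sum (matP s d) (fun M _ => by
    rw [hind M]
    exact (integrable_const (G M)).indicator (hAmeas M))]
  have hterm : ∀ M ∈ matP s d, (∫ ω, (if (fun i j => Φ ω i j) = M then G M else 0) ∂μ)
      = matW p s d M * G M := by
    intro M hM
    rw [hind M, integral_indicator_const (G M) (hAmeas M), smul_eq_mul, measureReal_def, hAweight M hM]
  rw [Finset.sum_congr rfl hterm]
  rfl

end Bridge

end SRLC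

theorem sign_random_linear_compressor
    {Ω : Type*} [MeasurableSpace Ω] (μ : Measure Ω) [IsProbabilityMeasure μ]
    (s d : ℕ) (hs : 0 < s) (hd : 0 < d) (p : ℝ) (hp : 0 < p) (hp2 : p ≤ 1 / 2)
    (Φ : Ω → Matrix (Fin s) (Fin d) ℝ)
    (hmeas : ∀ i j, Measurable fun ω => Φ ω i j)
    (hindep : iIndepFun
      (fun (ij : Fin s × Fin d) ω => Φ ω ij.1 ij.2) μ)
    (hlaw : ∀ i j, Measure.map (fun ω => Φ ω i j) μ = entryLaw p)
    (α r : ℝ) (hα : α = 2 * s * p) (hr : r = (d : ℝ) / s)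
    (β δ ρ : (Fin d → ℝ) → ℝ)
    (hρ : ∀ x, ρ x = (∑ i, |x i|) ^ 2 / ((d : ℝ) * ∑ i, x i ^ 2))
    (hβ : ∀ x, β x = (∑ i, |x i|) / ((d : ℝ) * (1 + α) * (1 + α * r)))
    (hδ : ∀ x, δ x = α / ((1 + α) * (1 + r * α) ^ 2) * ρ x) :
    ∀ x : Fin d → ℝ,
      ∫ ω, ∑ a, ((β x • ((Φ ω)ᵀ *ᵥ fun i => signQ ((Φ ω *ᵥ x) i)) : Fin d → ℝ) a - x a) ^ 2 ∂μ ≤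
        (1 - δ x) * ∑ a, x a ^ 2 := by

  intro x
  classical
  have hs0 : ((s : ℕ) : ℝ) ≠ 0 := Nat.cast_ne_zero.2 hs.ne'
  have hd0 : ((d : ℕ) : ℝ) ≠ 0 := Nat.cast_ne_zero.2 hd.ne'
  have hA : (0 : ℝ) < 1 + 2 * s * p := by positivity
  have hB : (0 : ℝ) < 1 + 2 * p * d := by positivity
  have hra : (d : ℝ) / (s : ℝ) * (2 * s * p) = 2 * p * d := by
    field_simp
  have hra' : (2 * (s : ℝ) * p) * ((d : ℝ) / (s : ℝ)) = 2 * p * d := by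
    field_simp
  have hbeta : β x = (∑ i, |x i|) / ((d : ℝ) * (1 + 2 * s * p) * (1 + 2 * p * d)) := by
    rw [hβ x, hα, hr, hra']
  have hint : ∀ ω, (∑ a, ((β x • ((Φ ω)ᵀ *ᵥ fun i => signQ ((Φ ω *ᵥ x) i)) : Fin d → ℝ) a
        - x a) ^ 2)
      = (fun M : Fin s → Fin d → ℝ =>
          ∑ a, (β x * (∑ i, M i a * signQ (∑ j, M i j * x j)) - x a) ^ 2)
        (fun i j => Φ ω i j) := by
    intro ω
    simp only [Matrix.mulVec, dotProduct, Matrix.transpose_apply, Pi.smul_apply,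
      smul_eq_mul]
  rw [show (fun ω => ∑ a, ((β x • ((Φ ω)ᵀ *ᵥ fun i => signQ ((Φ ω *ᵥ x) i)) : Fin d → ℝ) a
        - x a) ^ 2)
      = fun ω => (fun M : Fin s → Fin d → ℝ =>
          ∑ a, (β x * (∑ i, M i a * signQ (∑ j, M i j * x j)) - x a) ^ 2)
        (fun i j => Φ ω i j) from funext hint]
  rw [SRLC.integral_eq_Em μ s d p hp hp2 Φ hmeas hindep hlaw
    (fun M : Fin s → Fin d → ℝ =>
      ∑ a, (β x * (∑ i, M i a * signQ (∑ j, M i j * x j)) - x a) ^ 2)]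
  refine le_trans (SRLC.main_bound s d hs hd p hp hp2 x (β x) hbeta) ?_
  rcases eq_or_ne (∑ a, x a ^ 2) 0 with hQ | hQ
  · have hx0 : ∀ a ∈ Finset.univ, x a ^ 2 = 0 :=
      (Finset.sum_eq_zero_iff_of_nonneg (fun a _ => sq_nonneg _)).1 hQ
    have hL0 : (∑ i, |x i|) = 0 := Finset.sum_eq_zero fun i _ => by
      have h1 := hx0 i (Finset.mem_univ i)
      have h2 : x i = 0 := by nlinarith [sq_nonneg (x i), sq_abs (x i)]
      rw [h2, abs_zero]
    rw [hQ, hL0]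
    norm_num
  · have hδval : δ x * (∑ a, x a ^ 2)
        = 2 * s * p * (∑ i, |x i|) ^ 2
          / ((d : ℝ) * (1 + 2 * s * p) * (1 + 2 * p * d) ^ 2) := by
      rw [hδ x, hρ x, hα, hr, hra]
      field_simp
    have he : (1 - δ x) * (∑ a, x a ^ 2)
        = (∑ a, x a ^ 2) - δ x * (∑ a, x a ^ 2) := by ring
    rw [he, hδval]
end
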